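/- arXiv:1703.05199 — 11 statements merged into one kernel-verified Lean document; each statement's English description precedes it below -/
import Mathlib

section
/- Let X be a random variable taking values in the interval [0,1] with E[X] ≥ μ for some 0 < μ < 1/2, and let δ ∈ (0,1). For each integer r ≥ 1, set p_r = Pr[X ≥ 2^{−r}] and s_r = 4·ln(1/δ)/(μ·2^r). Then ∏_{r=1}^{⌈3·log₂(1/μ)⌉} (1 − p_r)^{s_r} ≤ δ. -/
/-!
Layer-cake over dyadic levels: for `x ≤ 1`, rounding `x` up to the next power of two gives
`x ≤ 2^{-R} + 2 ∑_{r=1}^{R} 2^{-r} 𝟙[x ≥ 2^{-r}]`. Taking expectations and using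
`2^{-R} ≤ μ/2` for `R = ⌈3 log₂(1/μ)⌉` yields `∑_r 2^{-r} p_r ≥ μ/4`, i.e. `∑_r s_r p_r ≥ ln(1/δ)`.
Since `(1 - p)^s ≤ e^{-sp}`, the product is at most `e^{-ln(1/δ)} = δ`.
-/

open MeasureTheory Real Finset

lemma one_sub_rpow_le_exp_neg_mul {p s : ℝ} (hp : p ≤ 1) (hs : 0 ≤ s) :
    (1 - p) ^ s ≤ exp (-(s * p)) :=
  calc (1 - p) ^ s ≤ exp (-p) ^ s := rpow_le_rpow (by linarith) (one_sub_le_exp_neg p) hs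
    _ = exp (-(s * p)) := by rw [← exp_mul]; ring_nf

lemma prod_one_sub_rpow_le_exp_neg_sum {ι : Type*} (t : Finset ι) {p s : ι → ℝ}
    (hp : ∀ i ∈ t, p i ≤ 1) (hs : ∀ i ∈ t, 0 ≤ s i) :
    ∏ i ∈ t, (1 - p i) ^ s i ≤ exp (-∑ i ∈ t, s i * p i) := by
  rw [← sum_neg_distrib, exp_sum]
  exact prod_le_prod (fun i hi => rpow_nonneg (by linarith [hp i hi]) _)
    fun i hi => one_sub_rpow_le_exp_neg_mul (hp i hi) (hs i hi)

lemma inv_two_pow_le_of_logb_le {y : ℝ} {n : ℕ} (hy : 0 < y) (hn : logb 2 (1 / y) ≤ n) :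
    ((2 : ℝ) ^ n)⁻¹ ≤ y := by
  rw [logb_le_iff_le_rpow one_lt_two (by positivity), rpow_natCast] at hn
  exact inv_le_of_inv_le₀ hy (by simpa using hn)

lemma inv_two_pow_ceil_three_logb_le {μ : ℝ} (hμ0 : 0 < μ) (hμ2 : μ ≤ 1 / 2) :
    ((2 : ℝ) ^ ⌈3 * logb 2 (1 / μ)⌉₊)⁻¹ ≤ μ / 2 := by
  have hlog : 1 ≤ logb 2 (1 / μ) := by
    rw [le_logb_iff_rpow_le one_lt_two (by positivity), rpow_one, le_one_div two_pos hμ0]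
    linarith
  refine inv_two_pow_le_of_logb_le (by positivity) ?_
  calc logb 2 (1 / (μ / 2)) = 1 + logb 2 (1 / μ) := by
        rw [one_div_div, div_eq_mul_one_div, logb_mul two_ne_zero (by positivity),
          logb_self_eq_one one_lt_two]
    _ ≤ 3 * logb 2 (1 / μ) := by linarith
    _ ≤ ⌈3 * logb 2 (1 / μ)⌉₊ := Nat.le_ceil _

noncomputable def dyadicMajorant (R : ℕ) (x : ℝ) : ℝ :=
  ((2 : ℝ) ^ R)⁻¹ + 2 * ∑ r ∈ Icc 1 R, ((2 : ℝ) ^ r)⁻¹ * (Set.Ici ((2 : ℝ) ^ r)⁻¹).indicator 1 x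

lemma le_dyadicMajorant {x : ℝ} (hx : x ≤ 1) (R : ℕ) : x ≤ dyadicMajorant R x := by
  induction R with
  | zero => simpa [dyadicMajorant] using hx
  | succ R ih =>
    have hS : 0 ≤ ∑ r ∈ Icc 1 R, ((2 : ℝ) ^ r)⁻¹ * (Set.Ici ((2 : ℝ) ^ r)⁻¹).indicator 1 x :=
      sum_nonneg fun r _ => mul_nonneg (by positivity) (Set.indicator_nonneg (by simp) _)
    unfold dyadicMajorant at ih ⊢
    rw [sum_Icc_succ_top (by omega), pow_succ]
    by_cases hxR : ((2 : ℝ) ^ R * 2)⁻¹ ≤ x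
    · rw [Set.indicator_of_mem (Set.mem_Ici.2 hxR)]
      have hhalf : ((2 : ℝ) ^ R * 2)⁻¹ = ((2 : ℝ) ^ R)⁻¹ / 2 := by rw [mul_inv, div_eq_mul_inv]
      simp only [Pi.one_apply, hhalf]
      linarith [inv_nonneg.2 (pow_nonneg zero_le_two R : (0 : ℝ) ≤ 2 ^ R)]
    · rw [Set.indicator_of_notMem (by simpa using hxR)]
      rw [not_le] at hxR
      simp only [mul_zero, add_zero]
      linarith

section

variable {Ω : Type*} [MeasurableSpace Ω] (P : Measure Ω) [IsProbabilityMeasure P] {X : Ω → ℝ}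

lemma integrable_mul_indicator_Ici_comp (hX : Measurable X) (a c : ℝ) :
    Integrable (fun ω => a * (Set.Ici c).indicator 1 (X ω)) P :=
  ((integrable_const (1 : ℝ)).indicator (hX measurableSet_Ici)).const_mul a

lemma integrable_dyadicMajorant_comp (hX : Measurable X) (R : ℕ) :
    Integrable (fun ω => dyadicMajorant R (X ω)) P :=
  (integrable_const _).add ((integrable_finsetSum _ fun _ _ =>
    integrable_mul_indicator_Ici_comp P hX _ _).const_mul _)

lemma integral_dyadicMajorant_comp (hX : Measurable X) (R : ℕ) :
    ∫ ω, dyadicMajorant R (X ω) ∂P =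
      ((2 : ℝ) ^ R)⁻¹ + 2 * ∑ r ∈ Icc 1 R, ((2 : ℝ) ^ r)⁻¹ * P.real {ω | ((2 : ℝ) ^ r)⁻¹ ≤ X ω} := by
  simp only [dyadicMajorant]
  rw [integral_add (integrable_const _) ((integrable_finsetSum _ fun _ _ =>
      integrable_mul_indicator_Ici_comp P hX _ _).const_mul _), integral_const,
    integral_const_mul, integral_finsetSum _ fun _ _ => integrable_mul_indicator_Ici_comp P hX _ _]
  simp only [probReal_univ, one_smul, integral_const_mul]
  congr 2
  exact sum_congr rfl fun r _ => congrArg _ (integral_indicator_one (hX measurableSet_Ici))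

lemma integral_le_dyadic_sum (hX : Measurable X) (hX0 : ∀ ω, 0 ≤ X ω)
    (hX1 : ∀ ω, X ω ≤ 1) (R : ℕ) :
    ∫ ω, X ω ∂P ≤
      ((2 : ℝ) ^ R)⁻¹ + 2 * ∑ r ∈ Icc 1 R, ((2 : ℝ) ^ r)⁻¹ * P.real {ω | ((2 : ℝ) ^ r)⁻¹ ≤ X ω} := by
  rw [← integral_dyadicMajorant_comp P hX]
  exact integral_mono_of_nonneg (.of_forall hX0) (integrable_dyadicMajorant_comp P hX R)
    (.of_forall fun ω => le_dyadicMajorant (hX1 ω) R)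

end

/-- Work investment strategy (Berman–Raskhodnikova–Yaroslavtsev): for a random variable
`X ∈ [0,1]` with `E[X] ≥ μ`, `0 < μ < 1/2`, setting `p_r = Pr[X ≥ 2^{-r}]` and
`s_r = 4 ln(1/δ) / (μ 2^r)`, we have `∏_{r=1}^{⌈3 log₂(1/μ)⌉} (1 - p_r)^{s_r} ≤ δ`. -/
theorem stmt1 {Ω : Type*} [MeasurableSpace Ω] (P : Measure Ω) [IsProbabilityMeasure P]
    (X : Ω → ℝ) (hX : Measurable X) (hX01 : ∀ ω, X ω ∈ Set.Icc (0 : ℝ) 1)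
    (μ : ℝ) (hμ0 : 0 < μ) (hμ2 : μ < 1 / 2) (hE : μ ≤ ∫ ω, X ω ∂P)
    (δ : ℝ) (hδ : δ ∈ Set.Ioo (0 : ℝ) 1) :
    ∏ r ∈ Finset.Icc 1 ⌈3 * Real.logb 2 (1 / μ)⌉₊,
      (1 - (P {ω | (2 : ℝ) ^ (-(r : ℤ)) ≤ X ω}).toReal) ^ (4 * Real.log (1 / δ) / (μ * 2 ^ r))
      ≤ δ := by
  set R := ⌈3 * logb 2 (1 / μ)⌉₊
  set L := log (1 / δ)
  have hL : 0 < L := log_pos (one_lt_one_div hδ.1 hδ.2)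
  simp_rw [zpow_neg, zpow_natCast, ← measureReal_def]
  have hmass : μ / 4 ≤ ∑ r ∈ Icc 1 R, ((2 : ℝ) ^ r)⁻¹ * P.real {ω | ((2 : ℝ) ^ r)⁻¹ ≤ X ω} := by
    linarith [integral_le_dyadic_sum P hX (fun ω => (hX01 ω).1) (fun ω => (hX01 ω).2) R,
      inv_two_pow_ceil_three_logb_le hμ0 hμ2.le]
  have hrate : ∑ r ∈ Icc 1 R, 4 * L / (μ * 2 ^ r) * P.real {ω | ((2 : ℝ) ^ r)⁻¹ ≤ X ω} =
      4 * L / μ * ∑ r ∈ Icc 1 R, ((2 : ℝ) ^ r)⁻¹ * P.real {ω | ((2 : ℝ) ^ r)⁻¹ ≤ X ω} := by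
    rw [mul_sum]
    exact sum_congr rfl fun r _ => by field_simp
  calc _ ≤ exp (-∑ r ∈ Icc 1 R, 4 * L / (μ * 2 ^ r) * P.real {ω | ((2 : ℝ) ^ r)⁻¹ ≤ X ω}) :=
        prod_one_sub_rpow_le_exp_neg_sum _ (fun _ _ => measureReal_le_one)
          fun _ _ => by positivity
    _ ≤ exp (-L) := by
        refine exp_le_exp.2 (neg_le_neg ?_)
        rw [hrate]
        calc L = 4 * L / μ * (μ / 4) := by field_simp
          _ ≤ _ := by gcongr
    _ = δ := by simp only [L, one_div, log_inv, neg_neg, exp_log hδ.1]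
end

section
/- Let h : [n] → ℝ and ε ∈ (0,1). If h is ε-far from nondecreasing, then the number of points x ∈ [n] whose binary search path Q_x contains a decreasing pair is at least ε·n. Symmetrically, if h is ε-far from nonincreasing, then the number of points x ∈ [n] whose binary search path Q_x contains an increasing pair is at least ε·n. -/
open scoped Classical

/-- The set of points visited by binary search for `x` in the interval `[lo, hi]`:
the search visits the midpoint `m = ⌈(lo+hi)/2⌉` and, if `x ≠ m`, continues on
`[lo, m-1]` when `x < m` and on `[m+1, hi]` when `x > m`. -/
def bsPath (x : ℕ) (lo hi : ℕ) : Finset ℕ :=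
  if _h : lo ≤ hi then
    if _h2 : x < (lo + hi + 1) / 2 then
      insert ((lo + hi + 1) / 2) (bsPath x lo ((lo + hi + 1) / 2 - 1))
    else if _h3 : (lo + hi + 1) / 2 < x then
      insert ((lo + hi + 1) / 2) (bsPath x ((lo + hi + 1) / 2 + 1) hi)
    else {(lo + hi + 1) / 2}
  else ∅
termination_by hi + 1 - lo
decreasing_by
  all_goals omega

/-- `S` contains an increasing pair with respect to `h`. -/
def HasIncPair (h : ℕ → ℝ) (S : Finset ℕ) : Prop :=
  ∃ u ∈ S, ∃ v ∈ S, u < v ∧ h u < h v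

/-- `S` contains a decreasing pair with respect to `h`. -/
def HasDecPair (h : ℕ → ℝ) (S : Finset ℕ) : Prop :=
  ∃ u ∈ S, ∃ v ∈ S, u < v ∧ h v < h u

lemma mem_bsPath_self_aux : ∀ k lo hi x : ℕ, hi + 1 - lo ≤ k → lo ≤ x → x ≤ hi →
    x ∈ bsPath x lo hi := by
  intro k
  induction k with
  | zero => intro lo hi x hk h1 h2; omega
  | succ k ih =>
    intro lo hi x hk h1 h2
    have hlohi : lo ≤ hi := le_trans h1 h2
    rw [bsPath, dif_pos hlohi]
    set m := (lo + hi + 1) / 2 with hm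
    have hmlo : lo ≤ m := by omega
    have hmhi : m ≤ hi := by omega
    by_cases hx : x < m
    · rw [dif_pos hx]
      exact Finset.mem_insert_of_mem (ih lo (m - 1) x (by omega) h1 (by omega))
    · rw [dif_neg hx]
      by_cases hx2 : m < x
      · rw [dif_pos hx2]
        exact Finset.mem_insert_of_mem (ih (m + 1) hi x (by omega) (by omega) h2)
      · rw [dif_neg hx2]
        have : x = m := by omega
        simp [this]

lemma mem_bsPath_self (lo hi x : ℕ) (h1 : lo ≤ x) (h2 : x ≤ hi) : x ∈ bsPath x lo hi :=
  mem_bsPath_self_aux (hi + 1 - lo) lo hi x le_rfl h1 h2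

lemma mid_mem_bsPath (x lo hi : ℕ) (hlohi : lo ≤ hi) : (lo + hi + 1) / 2 ∈ bsPath x lo hi := by
  rw [bsPath, dif_pos hlohi]
  by_cases hx : x < (lo + hi + 1) / 2
  · rw [dif_pos hx]; exact Finset.mem_insert_self _ _
  · rw [dif_neg hx]
    by_cases hx2 : (lo + hi + 1) / 2 < x
    · rw [dif_pos hx2]; exact Finset.mem_insert_self _ _
    · rw [dif_neg hx2]; simp

lemma bsPath_split : ∀ k lo hi x y : ℕ, hi + 1 - lo ≤ k → lo ≤ x → x < y → y ≤ hi →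
    ∃ m, m ∈ bsPath x lo hi ∧ m ∈ bsPath y lo hi ∧ x ≤ m ∧ m ≤ y := by
  intro k
  induction k with
  | zero => intro lo hi x y hk h1 h2 h3; omega
  | succ k ih =>
    intro lo hi x y hk h1 h2 h3
    have hlohi : lo ≤ hi := by omega
    set m := (lo + hi + 1) / 2 with hm
    by_cases hy : y < m
    · have hx : x < m := by omega
      obtain ⟨m', hm1, hm2, hm3, hm4⟩ := ih lo (m - 1) x y (by omega) h1 h2 (by omega)
      refine ⟨m', ?_, ?_, hm3, hm4⟩
      · rw [bsPath, dif_pos hlohi, dif_pos hx]; exact Finset.mem_insert_of_mem hm1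
      · rw [bsPath, dif_pos hlohi, dif_pos hy]; exact Finset.mem_insert_of_mem hm2
    · by_cases hx : m < x
      · have hy2 : m < y := by omega
        obtain ⟨m', hm1, hm2, hm3, hm4⟩ := ih (m + 1) hi x y (by omega) (by omega) h2 h3
        refine ⟨m', ?_, ?_, hm3, hm4⟩
        · rw [bsPath, dif_pos hlohi, dif_neg (by omega), dif_pos hx]
          exact Finset.mem_insert_of_mem hm1
        · rw [bsPath, dif_pos hlohi, dif_neg (by omega), dif_pos hy2]
          exact Finset.mem_insert_of_mem hm2
      · exact ⟨m, mid_mem_bsPath x lo hi hlohi, mid_mem_bsPath y lo hi hlohi,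
          by omega, by omega⟩

/-- Monotone extension of `h` from a finite set `G`. -/
noncomputable def extFn (h : ℕ → ℝ) (G : Finset ℕ) (z : ℕ) : ℝ :=
  if hz : (G.filter (fun w => w ≤ z)).Nonempty then h ((G.filter (fun w => w ≤ z)).max' hz)
  else if hG : G.Nonempty then h (G.min' hG) else 0

lemma extFn_eq (h : ℕ → ℝ) (G : Finset ℕ) (z : ℕ) (hz : z ∈ G) : extFn h G z = h z := by
  have hmem : z ∈ G.filter (fun w => w ≤ z) := Finset.mem_filter.2 ⟨hz, le_rfl⟩
  have hne : (G.filter (fun w => w ≤ z)).Nonempty := ⟨z, hmem⟩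
  rw [extFn, dif_pos hne]
  congr 1
  have h1 := Finset.le_max' _ z hmem
  have h2 := (Finset.mem_filter.1 (Finset.max'_mem _ hne)).2
  omega

lemma extFn_mono (h : ℕ → ℝ) (G : Finset ℕ)
    (hmono : ∀ u ∈ G, ∀ v ∈ G, u ≤ v → h u ≤ h v) : Monotone (extFn h G) := by
  intro z z' hzz'
  have hsub : G.filter (fun w => w ≤ z) ⊆ G.filter (fun w => w ≤ z') := by
    intro w hw
    rcases Finset.mem_filter.1 hw with ⟨h1, h2⟩
    exact Finset.mem_filter.2 ⟨h1, le_trans h2 hzz'⟩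
  by_cases hz : (G.filter (fun w => w ≤ z)).Nonempty
  · have hz' : (G.filter (fun w => w ≤ z')).Nonempty := hz.mono hsub
    rw [extFn, dif_pos hz, extFn, dif_pos hz']
    have hu := (Finset.mem_filter.1 (Finset.max'_mem _ hz)).1
    have hv := (Finset.mem_filter.1 (Finset.max'_mem _ hz')).1
    exact hmono _ hu _ hv (Finset.max'_subset _ hsub)
  · by_cases hz' : (G.filter (fun w => w ≤ z')).Nonempty
    · have hG : G.Nonempty := hz'.mono (Finset.filter_subset _ _)
      rw [extFn, dif_neg hz, dif_pos hG, extFn, dif_pos hz']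
      have hv := (Finset.mem_filter.1 (Finset.max'_mem _ hz')).1
      exact hmono _ (Finset.min'_mem _ hG) _ hv (Finset.min'_le _ _ hv)
    · rw [extFn, dif_neg hz, extFn, dif_neg hz']

/-- Key lemma: the far-from-monotone version. -/
lemma main_dec (n : ℕ) (h : ℕ → ℝ) (ε : ℝ)
    (far : ∀ g : ℕ → ℝ, MonotoneOn g (Set.Icc 1 n) →
      ε * n ≤ (((Finset.Icc 1 n).filter fun z => h z ≠ g z).card : ℝ)) :
    ε * n ≤ (((Finset.Icc 1 n).filter fun x => HasDecPair h (bsPath x 1 n)).card : ℝ) := by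
  set G : Finset ℕ := (Finset.Icc 1 n).filter (fun x => ¬ HasDecPair h (bsPath x 1 n)) with hG
  have hGmono : ∀ u ∈ G, ∀ v ∈ G, u ≤ v → h u ≤ h v := by
    intro u hu v hv huv
    rcases Finset.mem_filter.1 hu with ⟨hu1, hu2⟩
    rcases Finset.mem_filter.1 hv with ⟨hv1, hv2⟩
    rcases Finset.mem_Icc.1 hu1 with ⟨hu3, hu4⟩
    rcases Finset.mem_Icc.1 hv1 with ⟨hv3, hv4⟩
    rcases eq_or_lt_of_le huv with rfl | huv
    · exact le_rfl
    obtain ⟨m, hm1, hm2, hm3, hm4⟩ := bsPath_split (n + 1 - 1) 1 n u v le_rfl hu3 huv hv4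
    have h1 : h u ≤ h m := by
      rcases eq_or_lt_of_le hm3 with rfl | hlt
      · exact le_rfl
      · by_contra hc
        push_neg at hc
        exact hu2 ⟨u, mem_bsPath_self 1 n u hu3 hu4, m, hm1, hlt, hc⟩
    have h2 : h m ≤ h v := by
      rcases eq_or_lt_of_le hm4 with rfl | hlt
      · exact le_rfl
      · by_contra hc
        push_neg at hc
        exact hv2 ⟨m, hm2, v, mem_bsPath_self 1 n v hv3 hv4, hlt, hc⟩
    exact le_trans h1 h2
  have hmono : MonotoneOn (extFn h G) (Set.Icc 1 n) :=
    (extFn_mono h G hGmono).monotoneOn _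
  have hsub : (Finset.Icc 1 n).filter (fun z => h z ≠ extFn h G z) ⊆
      (Finset.Icc 1 n).filter (fun x => HasDecPair h (bsPath x 1 n)) := by
    intro z hz
    rcases Finset.mem_filter.1 hz with ⟨h1, h2⟩
    refine Finset.mem_filter.2 ⟨h1, ?_⟩
    by_contra hc
    exact h2 (extFn_eq h G z (Finset.mem_filter.2 ⟨h1, hc⟩)).symm
  calc ε * n ≤ (((Finset.Icc 1 n).filter fun z => h z ≠ extFn h G z).card : ℝ) :=
        far _ hmono
    _ ≤ _ := by exact_mod_cast Finset.card_le_card hsub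

/-- If `h : [n] → ℝ` is `ε`-far from nondecreasing, then at least `ε·n` points `x ∈ [n]`
have a decreasing pair on their binary search path; symmetrically for nonincreasing
and increasing pairs. -/
theorem stmt2 (n : ℕ) (h : ℕ → ℝ) (ε : ℝ) (hε : ε ∈ Set.Ioo (0 : ℝ) 1) :
    ((∀ g : ℕ → ℝ, MonotoneOn g (Set.Icc 1 n) →
        ε * n ≤ (((Finset.Icc 1 n).filter fun z => h z ≠ g z).card : ℝ)) →
      ε * n ≤ (((Finset.Icc 1 n).filter fun x => HasDecPair h (bsPath x 1 n)).card : ℝ)) ∧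
    ((∀ g : ℕ → ℝ, AntitoneOn g (Set.Icc 1 n) →
        ε * n ≤ (((Finset.Icc 1 n).filter fun z => h z ≠ g z).card : ℝ)) →
      ε * n ≤ (((Finset.Icc 1 n).filter fun x => HasIncPair h (bsPath x 1 n)).card : ℝ)) := by
  constructor
  · exact main_dec n h ε
  · intro far
    have key := main_dec n (fun z => -h z) ε ?_
    · have heq : ∀ x, HasDecPair (fun z => -h z) (bsPath x 1 n) ↔ HasIncPair h (bsPath x 1 n) := by
        intro x
        constructor
        · rintro ⟨u, hu, v, hv, h1, h2⟩
          have h2' : -h v < -h u := h2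
          exact ⟨u, hu, v, hv, h1, by linarith⟩
        · rintro ⟨u, hu, v, hv, h1, h2⟩
          exact ⟨u, hu, v, hv, h1, show -h v < -h u by linarith⟩
      have : ((Finset.Icc 1 n).filter fun x => HasDecPair (fun z => -h z) (bsPath x 1 n)) =
          ((Finset.Icc 1 n).filter fun x => HasIncPair h (bsPath x 1 n)) := by
        apply Finset.filter_congr
        intro x _
        exact (by simpa using heq x)
      rwa [this] at key
    · intro g hg
      have hanti : AntitoneOn (fun z => -g z) (Set.Icc 1 n) := by
        intro a ha b hb hab
        simpa using hg ha hb hab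
      have := far _ hanti
      have heq : ((Finset.Icc 1 n).filter fun z => h z ≠ -g z) =
          ((Finset.Icc 1 n).filter fun z => (fun z => -h z) z ≠ g z) := by
        apply Finset.filter_congr
        intro z _
        constructor
        · intro hne hc
          have hc' : -h z = g z := hc
          exact hne (by linarith)
        · intro hne hc
          exact hne (show -h z = g z by rw [hc]; ring)
      rwa [heq] at this
end

section
/- Let h : [n] → ℝ and let W ⊆ [n] be the set of all points x whose binary search path Q_x contains no decreasing pair. Then h restricted to W is nondecreasing: for all x, y ∈ W with x < y, h(x) ≤ h(y). -/
open scoped Classical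

lemma bsPath_mem_self (x lo hi : ℕ) (h1 : lo ≤ x) (h2 : x ≤ hi) :
    x ∈ bsPath x lo hi := by
  rw [bsPath]
  have hle : lo ≤ hi := le_trans h1 h2
  rw [dif_pos hle]
  set m := (lo + hi + 1) / 2 with hm
  by_cases h3 : x < m
  · rw [dif_pos h3]
    exact Finset.mem_insert_of_mem (bsPath_mem_self x lo (m - 1) h1 (by omega))
  · rw [dif_neg h3]
    by_cases h4 : m < x
    · rw [dif_pos h4]
      exact Finset.mem_insert_of_mem (bsPath_mem_self x (m + 1) hi h4 h2)
    · rw [dif_neg h4]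
      simp [show x = m by omega]
termination_by hi + 1 - lo
decreasing_by all_goals omega

lemma bsPath_common (x y lo hi : ℕ) (h1 : lo ≤ x) (h2 : y ≤ hi) (hxy : x ≤ y) :
    ∃ m, m ∈ bsPath x lo hi ∧ m ∈ bsPath y lo hi ∧ x ≤ m ∧ m ≤ y := by
  have hle : lo ≤ hi := by omega
  set m := (lo + hi + 1) / 2 with hm
  by_cases h3 : y < m
  · have h3x : x < m := by omega
    obtain ⟨w, hw1, hw2, hw3, hw4⟩ := bsPath_common x y lo (m - 1) h1 (by omega) hxy
    refine ⟨w, ?_, ?_, hw3, hw4⟩ <;>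
      (rw [bsPath, dif_pos hle]; rw [← hm])
    · rw [dif_pos h3x]; exact Finset.mem_insert_of_mem hw1
    · rw [dif_pos h3]; exact Finset.mem_insert_of_mem hw2
  · by_cases h4 : m < x
    · have h4y : m < y := by omega
      obtain ⟨w, hw1, hw2, hw3, hw4⟩ := bsPath_common x y (m + 1) hi h4 h2 hxy
      refine ⟨w, ?_, ?_, hw3, hw4⟩ <;>
        (rw [bsPath, dif_pos hle]; rw [← hm])
      · rw [dif_neg (by omega), dif_pos h4]; exact Finset.mem_insert_of_mem hw1
      · rw [dif_neg (by omega), dif_pos h4y]; exact Finset.mem_insert_of_mem hw2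
  -- here x ≤ m ≤ y
    · refine ⟨m, ?_, ?_, by omega, by omega⟩ <;>
        (rw [bsPath, dif_pos hle]; rw [← hm])
      · by_cases h5 : x < m
        · rw [dif_pos h5]; exact Finset.mem_insert_self _ _
        · rw [dif_neg h5, dif_neg (by omega)]; simp
      · by_cases h5 : m < y
        · rw [dif_neg (by omega), dif_pos h5]; exact Finset.mem_insert_self _ _
        · rw [dif_neg (by omega), dif_neg h5]; simp
termination_by hi + 1 - lo
decreasing_by all_goals omega

/-- The restriction of `h` to the set of points whose binary search path contains no
decreasing pair is nondecreasing. -/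
theorem stmt4 (n : ℕ) (h : ℕ → ℝ) (x y : ℕ)
    (hx : x ∈ Finset.Icc 1 n) (hy : y ∈ Finset.Icc 1 n)
    (hxW : ¬ HasDecPair h (bsPath x 1 n)) (hyW : ¬ HasDecPair h (bsPath y 1 n))
    (hxy : x < y) : h x ≤ h y := by
  simp only [Finset.mem_Icc] at hx hy
  obtain ⟨m, hm1, hm2, hm3, hm4⟩ :=
    bsPath_common x y 1 n hx.1 hy.2 (le_of_lt hxy)
  have hxm : h x ≤ h m := by
    rcases eq_or_lt_of_le hm3 with rfl | hlt
    · exact le_refl _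
    · by_contra hc
      exact hxW ⟨x, bsPath_mem_self x 1 n hx.1 hx.2, m, hm1, hlt, not_le.mp hc⟩
  have hmy : h m ≤ h y := by
    rcases eq_or_lt_of_le hm4 with rfl | hlt
    · exact le_refl _
    · by_contra hc
      exact hyW ⟨m, hm2, y, bsPath_mem_self y 1 n hy.1 hy.2, hlt, not_le.mp hc⟩
  exact le_trans hxm hmy
end

section
/- Let h : [n] → ℝ, and let x, y ∈ [n] be such that the binary search path Q_x contains a decreasing pair but no increasing pair, while Q_y contains an increasing pair but no decreasing pair. Then Q_x ∩ Q_y = {m₀}, where m₀ = ⌈(1+n)/2⌉ is the root, i.e., the first point visited by every binary search. -/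
open scoped Classical

namespace BSAux

lemma bsPath_left {x lo hi : ℕ} (h1 : lo ≤ hi) (h2 : x < (lo + hi + 1) / 2) :
    bsPath x lo hi = insert ((lo + hi + 1) / 2) (bsPath x lo ((lo + hi + 1) / 2 - 1)) := by
  rw [bsPath, dif_pos h1, dif_pos h2]

lemma bsPath_right {x lo hi : ℕ} (h1 : lo ≤ hi) (h2 : (lo + hi + 1) / 2 < x) :
    bsPath x lo hi = insert ((lo + hi + 1) / 2) (bsPath x ((lo + hi + 1) / 2 + 1) hi) := by
  rw [bsPath, dif_pos h1, dif_neg (by omega), dif_pos h2]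

lemma bsPath_mid {lo hi : ℕ} (h1 : lo ≤ hi) :
    bsPath ((lo + hi + 1) / 2) lo hi = {(lo + hi + 1) / 2} := by
  rw [bsPath, dif_pos h1, dif_neg (by omega), dif_neg (by omega)]

lemma mid_mem {x lo hi : ℕ} (h1 : lo ≤ hi) : (lo + hi + 1) / 2 ∈ bsPath x lo hi := by
  rcases lt_trichotomy x ((lo + hi + 1) / 2) with h2 | h2 | h2
  · rw [bsPath_left h1 h2]; exact Finset.mem_insert_self _ _
  · subst h2; rw [bsPath_mid h1]; simp
  · rw [bsPath_right h1 h2]; exact Finset.mem_insert_self _ _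

lemma subset_Icc_aux : ∀ n lo hi x, hi + 1 - lo ≤ n → bsPath x lo hi ⊆ Finset.Icc lo hi := by
  intro n
  induction n with
  | zero => intro lo hi x hn; rw [bsPath, dif_neg (by omega)]; simp
  | succ n ih =>
    intro lo hi x hn
    by_cases h1 : lo ≤ hi
    · have hm1 : lo ≤ (lo + hi + 1) / 2 := by omega
      have hm2 : (lo + hi + 1) / 2 ≤ hi := by omega
      rcases lt_trichotomy x ((lo + hi + 1) / 2) with h2 | h2 | h2
      · rw [bsPath_left h1 h2]
        intro z hz
        rcases Finset.mem_insert.mp hz with rfl | hz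
        · simp [Finset.mem_Icc]; omega
        · have := ih lo ((lo + hi + 1) / 2 - 1) x (by omega) hz
          simp only [Finset.mem_Icc] at this ⊢; omega
      · subst h2
        rw [bsPath_mid h1]
        intro z hz; simp only [Finset.mem_singleton] at hz; subst hz
        simp only [Finset.mem_Icc]; omega
      · rw [bsPath_right h1 h2]
        intro z hz
        rcases Finset.mem_insert.mp hz with rfl | hz
        · simp [Finset.mem_Icc]; omega
        · have := ih ((lo + hi + 1) / 2 + 1) hi x (by omega) hz
          simp only [Finset.mem_Icc] at this ⊢; omega
    · rw [bsPath, dif_neg h1]; simp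

lemma bsPath_subset {x lo hi : ℕ} : bsPath x lo hi ⊆ Finset.Icc lo hi :=
  subset_Icc_aux (hi + 1 - lo) lo hi x le_rfl

lemma inc_mono {h : ℕ → ℝ} {S T : Finset ℕ} (hst : S ⊆ T) :
    HasIncPair h S → HasIncPair h T := by
  rintro ⟨u, hu, v, hv, huv, hval⟩
  exact ⟨u, hst hu, v, hst hv, huv, hval⟩

lemma dec_mono {h : ℕ → ℝ} {S T : Finset ℕ} (hst : S ⊆ T) :
    HasDecPair h S → HasDecPair h T := by
  rintro ⟨u, hu, v, hv, huv, hval⟩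
  exact ⟨u, hst hu, v, hst hv, huv, hval⟩

lemma noInc {h : ℕ → ℝ} {S : Finset ℕ} (hS : ¬ HasIncPair h S) :
    ∀ u ∈ S, ∀ v ∈ S, u < v → h v ≤ h u := by
  intro u hu v hv huv
  by_contra hc
  exact hS ⟨u, hu, v, hv, huv, lt_of_not_ge hc⟩

lemma noDec {h : ℕ → ℝ} {S : Finset ℕ} (hS : ¬ HasDecPair h S) :
    ∀ u ∈ S, ∀ v ∈ S, u < v → h u ≤ h v := by
  intro u hu v hv huv
  by_contra hc
  exact hS ⟨u, hu, v, hv, huv, lt_of_not_ge hc⟩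

lemma dec_neg_iff {h : ℕ → ℝ} {S : Finset ℕ} :
    HasDecPair (fun i => -(h i)) S ↔ HasIncPair h S := by
  constructor
  · rintro ⟨u, hu, v, hv, huv, hval⟩
    exact ⟨u, hu, v, hv, huv, by simpa using hval⟩
  · rintro ⟨u, hu, v, hv, huv, hval⟩
    exact ⟨u, hu, v, hv, huv, by simpa using hval⟩

lemma inc_neg_iff {h : ℕ → ℝ} {S : Finset ℕ} :
    HasIncPair (fun i => -(h i)) S ↔ HasDecPair h S := by
  constructor
  · rintro ⟨u, hu, v, hv, huv, hval⟩
    exact ⟨u, hu, v, hv, huv, by simpa using hval⟩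
  · rintro ⟨u, hu, v, hv, huv, hval⟩
    exact ⟨u, hu, v, hv, huv, by simpa using hval⟩

lemma not_dec_singleton {h : ℕ → ℝ} {a : ℕ} : ¬ HasDecPair h {a} := by
  rintro ⟨u, hu, v, hv, huv, -⟩
  simp only [Finset.mem_singleton] at hu hv
  omega

/-- Left-side key lemma: if `x` goes left at the midpoint, the path has a decreasing
but no increasing pair, and the values at the midpoint and the left-child midpoint agree,
then `x` goes left again and the subpath still has a decreasing pair. -/
lemma keyLeft {h : ℕ → ℝ} {lo hi x : ℕ} (h1 : lo ≤ hi) (hxlo : lo ≤ x)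
    (hxm : x < (lo + hi + 1) / 2)
    (hD : HasDecPair h (bsPath x lo hi)) (hI : ¬ HasIncPair h (bsPath x lo hi))
    (heq : h ((lo + ((lo + hi + 1) / 2 - 1) + 1) / 2) = h ((lo + hi + 1) / 2)) :
    x < (lo + ((lo + hi + 1) / 2 - 1) + 1) / 2 ∧
      HasDecPair h (bsPath x lo ((lo + hi + 1) / 2 - 1)) := by
  set mid := (lo + hi + 1) / 2 with hmid
  set m₁ := (lo + (mid - 1) + 1) / 2 with hm₁
  have hlo' : lo ≤ mid - 1 := by omega
  have hm₁lt : m₁ < mid := by omega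
  have hQ : bsPath x lo hi = insert mid (bsPath x lo (mid - 1)) := bsPath_left h1 hxm
  set Q' := bsPath x lo (mid - 1) with hQ'
  have hQ'sub : Q' ⊆ Finset.Icc lo (mid - 1) := bsPath_subset
  have hQ'Q : Q' ⊆ bsPath x lo hi := by rw [hQ]; exact Finset.subset_insert _ _
  have hmidQ : mid ∈ bsPath x lo hi := by rw [hQ]; exact Finset.mem_insert_self _ _
  have hm₁Q' : m₁ ∈ Q' := mid_mem hlo'
  have hnoinc := noInc hI
  -- Step 1: Q' has a decreasing pair
  have hD' : HasDecPair h Q' := by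
    obtain ⟨u, hu, v, hv, huv, hval⟩ := hD
    rw [hQ] at hu hv
    rcases Finset.mem_insert.mp hv with rfl | hv'
    · -- v = mid
      have hu' : u ∈ Q' := by
        rcases Finset.mem_insert.mp hu with rfl | hu'
        · omega
        · exact hu'
      have huval : h m₁ < h u := by rw [heq]; exact hval
      rcases lt_trichotomy u m₁ with hc | hc | hc
      · exact ⟨u, hu', m₁, hm₁Q', hc, huval⟩
      · rw [hc] at huval; exact absurd huval (lt_irrefl _)
      · exact absurd huval (not_lt.mpr (hnoinc m₁ (hQ'Q hm₁Q') u (hQ'Q hu') hc))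
    · -- v ∈ Q'
      have hvlt : v < mid := by
        have := hQ'sub hv'; simp only [Finset.mem_Icc] at this; omega
      have hu' : u ∈ Q' := by
        rcases Finset.mem_insert.mp hu with rfl | hu'
        · omega
        · exact hu'
      exact ⟨u, hu', v, hv', huv, hval⟩
  refine ⟨?_, hD'⟩
  -- Step 2: x < m₁
  by_contra hc
  push_neg at hc
  rcases eq_or_lt_of_le hc with hc' | hc'
  · -- x = m₁ : Q' is a singleton
    have hsing : bsPath ((lo + (mid - 1) + 1) / 2) lo (mid - 1)
        = {(lo + (mid - 1) + 1) / 2} := bsPath_mid hlo'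
    rw [← hm₁] at hsing
    rw [hQ', ← hc', hsing] at hD'
    exact not_dec_singleton hD'
  · -- m₁ < x < mid : all values on Q' equal h m₁
    have hconst : ∀ w ∈ Q', h w = h m₁ := by
      intro w hw
      have hw1 : m₁ ≤ w := by
        have hQ'eq : Q' = insert m₁ (bsPath x (m₁ + 1) (mid - 1)) := bsPath_right hlo' hc'
        rw [hQ'eq] at hw
        rcases Finset.mem_insert.mp hw with rfl | hw'
        · exact le_rfl
        · have := bsPath_subset hw'; simp only [Finset.mem_Icc] at this; omega
      have hw2 : w < mid := by
        have := hQ'sub hw; simp only [Finset.mem_Icc] at this; omega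
      have hge : h mid ≤ h w := hnoinc w (hQ'Q hw) mid hmidQ hw2
      rcases eq_or_lt_of_le hw1 with rfl | hlt
      · rfl
      · have hle : h w ≤ h m₁ := hnoinc m₁ (hQ'Q hm₁Q') w (hQ'Q hw) hlt
        rw [← heq] at hge
        linarith
    obtain ⟨u, hu, v, hv, huv, hval⟩ := hD'
    rw [hconst u hu, hconst v hv] at hval
    exact absurd hval (lt_irrefl _)

/-- Right-side analogue of `keyLeft`. -/
lemma keyRight {h : ℕ → ℝ} {lo hi x : ℕ} (h1 : lo ≤ hi) (hxhi : x ≤ hi)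
    (hxm : (lo + hi + 1) / 2 < x)
    (hD : HasDecPair h (bsPath x lo hi)) (hI : ¬ HasIncPair h (bsPath x lo hi))
    (heq : h (((lo + hi + 1) / 2 + 1 + hi + 1) / 2) = h ((lo + hi + 1) / 2)) :
    ((lo + hi + 1) / 2 + 1 + hi + 1) / 2 < x ∧
      HasDecPair h (bsPath x ((lo + hi + 1) / 2 + 1) hi) := by
  set mid := (lo + hi + 1) / 2 with hmid
  set m₁ := (mid + 1 + hi + 1) / 2 with hm₁
  have hlo' : mid + 1 ≤ hi := by omega
  have hm₁gt : mid < m₁ := by omega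
  have hm₁le : m₁ ≤ hi := by omega
  have hQ : bsPath x lo hi = insert mid (bsPath x (mid + 1) hi) := bsPath_right h1 hxm
  set Q' := bsPath x (mid + 1) hi with hQ'
  have hQ'sub : Q' ⊆ Finset.Icc (mid + 1) hi := bsPath_subset
  have hQ'Q : Q' ⊆ bsPath x lo hi := by rw [hQ]; exact Finset.subset_insert _ _
  have hmidQ : mid ∈ bsPath x lo hi := by rw [hQ]; exact Finset.mem_insert_self _ _
  have hm₁Q' : m₁ ∈ Q' := mid_mem hlo'
  have hnoinc := noInc hI
  -- Step 1: Q' has a decreasing pair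
  have hD' : HasDecPair h Q' := by
    obtain ⟨u, hu, v, hv, huv, hval⟩ := hD
    rw [hQ] at hu hv
    rcases Finset.mem_insert.mp hu with rfl | hu'
    · -- u = mid
      have hv' : v ∈ Q' := by
        rcases Finset.mem_insert.mp hv with rfl | hv'
        · omega
        · exact hv'
      have hvval : h v < h m₁ := by rw [heq]; exact hval
      rcases lt_trichotomy v m₁ with hc | hc | hc
      · exact absurd hvval (not_lt.mpr (hnoinc v (hQ'Q hv') m₁ (hQ'Q hm₁Q') hc))
      · rw [hc] at hvval; exact absurd hvval (lt_irrefl _)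
      · exact ⟨m₁, hm₁Q', v, hv', hc, hvval⟩
    · -- u ∈ Q'
      have hv' : v ∈ Q' := by
        rcases Finset.mem_insert.mp hv with rfl | hv'
        · have := hQ'sub hu'; simp only [Finset.mem_Icc] at this; omega
        · exact hv'
      exact ⟨u, hu', v, hv', huv, hval⟩
  refine ⟨?_, hD'⟩
  -- Step 2: m₁ < x
  by_contra hc
  push_neg at hc
  rcases eq_or_lt_of_le hc with hc' | hc'
  · have hsing : bsPath ((mid + 1 + hi + 1) / 2) (mid + 1) hi
        = {(mid + 1 + hi + 1) / 2} := bsPath_mid hlo'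
    rw [← hm₁] at hsing
    rw [hQ', hc', hsing] at hD'
    exact not_dec_singleton hD'
  · -- mid < x < m₁ : all values on Q' equal h m₁
    have hconst : ∀ w ∈ Q', h w = h m₁ := by
      intro w hw
      have hw1 : w ≤ m₁ := by
        have hQ'eq : Q' = insert m₁ (bsPath x (mid + 1) (m₁ - 1)) := bsPath_left hlo' hc'
        rw [hQ'eq] at hw
        rcases Finset.mem_insert.mp hw with rfl | hw'
        · exact le_rfl
        · have := bsPath_subset hw'; simp only [Finset.mem_Icc] at this; omega
      have hw2 : mid < w := by
        have := hQ'sub hw; simp only [Finset.mem_Icc] at this; omega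
      have hle : h w ≤ h mid := hnoinc mid hmidQ w (hQ'Q hw) hw2
      rcases eq_or_lt_of_le hw1 with rfl | hlt
      · rfl
      · have hge : h m₁ ≤ h w := hnoinc w (hQ'Q hw) m₁ (hQ'Q hm₁Q') hlt
        rw [← heq] at hle
        linarith
    obtain ⟨u, hu, v, hv, huv, hval⟩ := hD'
    rw [hconst u hu, hconst v hv] at hval
    exact absurd hval (lt_irrefl _)

/-- Main induction: `x` and `y` must lie on opposite sides of the midpoint. -/
lemma opposite_sides (h : ℕ → ℝ) : ∀ n lo hi x y, hi + 1 - lo ≤ n → lo ≤ hi →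
    x ∈ Finset.Icc lo hi → y ∈ Finset.Icc lo hi →
    HasDecPair h (bsPath x lo hi) → ¬ HasIncPair h (bsPath x lo hi) →
    HasIncPair h (bsPath y lo hi) → ¬ HasDecPair h (bsPath y lo hi) →
    (x < (lo + hi + 1) / 2 ∧ (lo + hi + 1) / 2 < y) ∨
      (y < (lo + hi + 1) / 2 ∧ (lo + hi + 1) / 2 < x) := by
  intro n
  induction n with
  | zero => intro lo hi x y hn; omega
  | succ n ih =>
    intro lo hi x y hn h1 hx hy hxD hxI hyI hyD
    simp only [Finset.mem_Icc] at hx hy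
    set mid := (lo + hi + 1) / 2 with hmid
    have hxne : x ≠ mid := by
      rintro rfl
      rw [bsPath_mid h1] at hxD
      exact not_dec_singleton hxD
    have hyne : y ≠ mid := by
      rintro rfl
      rw [bsPath_mid h1] at hyI
      exact not_dec_singleton (dec_neg_iff.mpr hyI)
    rcases lt_or_gt_of_ne hxne with hxlt | hxgt
    · rcases lt_or_gt_of_ne hyne with hylt | hygt
      · -- both left : contradiction
        exfalso
        set m₁ := (lo + (mid - 1) + 1) / 2 with hm₁
        have hlo' : lo ≤ mid - 1 := by omega
        have hm₁lt : m₁ < mid := by omega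
        have hQx : bsPath x lo hi = insert mid (bsPath x lo (mid - 1)) := bsPath_left h1 hxlt
        have hQy : bsPath y lo hi = insert mid (bsPath y lo (mid - 1)) := bsPath_left h1 hylt
        have hm₁x : m₁ ∈ bsPath x lo hi := by
          rw [hQx]; exact Finset.mem_insert_of_mem (mid_mem hlo')
        have hm₁y : m₁ ∈ bsPath y lo hi := by
          rw [hQy]; exact Finset.mem_insert_of_mem (mid_mem hlo')
        have hmidx : mid ∈ bsPath x lo hi := mid_mem h1
        have hmidy : mid ∈ bsPath y lo hi := mid_mem h1
        have heq : h m₁ = h mid :=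
          le_antisymm (noDec hyD m₁ hm₁y mid hmidy hm₁lt)
            (noInc hxI m₁ hm₁x mid hmidx hm₁lt)
        obtain ⟨hxm₁, hxD'⟩ := keyLeft h1 hx.1 hxlt hxD hxI heq
        have heq' : (fun i => -(h i)) m₁ = (fun i => -(h i)) mid := by
          simp only; rw [heq]
        obtain ⟨hym₁, hyI'⟩ := keyLeft (h := fun i => -(h i)) h1 hy.1 hylt
          (dec_neg_iff.mpr hyI) (fun hc => hyD (inc_neg_iff.mp hc)) heq'
        have hxI' : ¬ HasIncPair h (bsPath x lo (mid - 1)) := fun hc =>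
          hxI (inc_mono (by rw [hQx]; exact Finset.subset_insert _ _) hc)
        have hyD' : ¬ HasDecPair h (bsPath y lo (mid - 1)) := fun hc =>
          hyD (dec_mono (by rw [hQy]; exact Finset.subset_insert _ _) hc)
        have := ih lo (mid - 1) x y (by omega) hlo'
          (by simp only [Finset.mem_Icc]; omega) (by simp only [Finset.mem_Icc]; omega)
          hxD' hxI' (dec_neg_iff.mp hyI') hyD'
        rw [← hm₁] at this
        omega
      · exact Or.inl ⟨hxlt, hygt⟩
    · rcases lt_or_gt_of_ne hyne with hylt | hygt
      · exact Or.inr ⟨hylt, hxgt⟩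
      · -- both right : contradiction
        exfalso
        set m₁ := (mid + 1 + hi + 1) / 2 with hm₁
        have hlo' : mid + 1 ≤ hi := by omega
        have hm₁gt : mid < m₁ := by omega
        have hQx : bsPath x lo hi = insert mid (bsPath x (mid + 1) hi) := bsPath_right h1 hxgt
        have hQy : bsPath y lo hi = insert mid (bsPath y (mid + 1) hi) := bsPath_right h1 hygt
        have hm₁x : m₁ ∈ bsPath x lo hi := by
          rw [hQx]; exact Finset.mem_insert_of_mem (mid_mem hlo')
        have hm₁y : m₁ ∈ bsPath y lo hi := by
          rw [hQy]; exact Finset.mem_insert_of_mem (mid_mem hlo')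
        have hmidx : mid ∈ bsPath x lo hi := mid_mem h1
        have hmidy : mid ∈ bsPath y lo hi := mid_mem h1
        have heq : h m₁ = h mid :=
          le_antisymm (noInc hxI mid hmidx m₁ hm₁x hm₁gt)
            (noDec hyD mid hmidy m₁ hm₁y hm₁gt)
        obtain ⟨hxm₁, hxD'⟩ := keyRight h1 hx.2 hxgt hxD hxI heq
        have heq' : (fun i => -(h i)) m₁ = (fun i => -(h i)) mid := by
          simp only; rw [heq]
        obtain ⟨hym₁, hyI'⟩ := keyRight (h := fun i => -(h i)) h1 hy.2 hygt
          (dec_neg_iff.mpr hyI) (fun hc => hyD (inc_neg_iff.mp hc)) heq'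
        have hxI' : ¬ HasIncPair h (bsPath x (mid + 1) hi) := fun hc =>
          hxI (inc_mono (by rw [hQx]; exact Finset.subset_insert _ _) hc)
        have hyD' : ¬ HasDecPair h (bsPath y (mid + 1) hi) := fun hc =>
          hyD (dec_mono (by rw [hQy]; exact Finset.subset_insert _ _) hc)
        have := ih (mid + 1) hi x y (by omega) hlo'
          (by simp only [Finset.mem_Icc]; omega) (by simp only [Finset.mem_Icc]; omega)
          hxD' hxI' (dec_neg_iff.mp hyI') hyD'
        rw [← hm₁] at this
        omega

end BSAux

/-- If `Q_x` contains a decreasing but no increasing pair and `Q_y` contains an increasing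
but no decreasing pair, then `Q_x ∩ Q_y` consists exactly of the root `⌈(1+n)/2⌉` of the
binary search tree. -/
theorem stmt5 (n : ℕ) (hn : 1 ≤ n) (h : ℕ → ℝ) (x y : ℕ)
    (hx : x ∈ Finset.Icc 1 n) (hy : y ∈ Finset.Icc 1 n)
    (hxD : HasDecPair h (bsPath x 1 n)) (hxI : ¬ HasIncPair h (bsPath x 1 n))
    (hyI : HasIncPair h (bsPath y 1 n)) (hyD : ¬ HasDecPair h (bsPath y 1 n)) :
    bsPath x 1 n ∩ bsPath y 1 n = {(1 + n + 1) / 2} := by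
  have h1 : (1 : ℕ) ≤ n := hn
  set mid := (1 + n + 1) / 2 with hmid
  have hopp := BSAux.opposite_sides h (n + 1 - 1) 1 n x y le_rfl h1 hx hy hxD hxI hyI hyD
  rw [← hmid] at hopp
  have hmain : ∀ a b : ℕ, a < mid → mid < b →
      bsPath a 1 n ∩ bsPath b 1 n = {mid} := by
    intro a b ha hb
    have hQa : bsPath a 1 n = insert mid (bsPath a 1 (mid - 1)) := BSAux.bsPath_left h1 ha
    have hQb : bsPath b 1 n = insert mid (bsPath b (mid + 1) n) := BSAux.bsPath_right h1 hb
    ext z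
    simp only [Finset.mem_inter, Finset.mem_singleton]
    constructor
    · rintro ⟨hza, hzb⟩
      rw [hQa] at hza
      rw [hQb] at hzb
      rcases Finset.mem_insert.mp hza with rfl | hza'
      · rfl
      rcases Finset.mem_insert.mp hzb with rfl | hzb'
      · rfl
      have h1' := BSAux.bsPath_subset hza'
      have h2' := BSAux.bsPath_subset hzb'
      simp only [Finset.mem_Icc] at h1' h2'
      omega
    · rintro rfl
      exact ⟨BSAux.mid_mem h1, BSAux.mid_mem h1⟩
  rcases hopp with ⟨ha, hb⟩ | ⟨hb, ha⟩
  · exact hmain x y ha hb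
  · have := hmain y x hb ha
    rw [Finset.inter_comm] at this
    exact this
end

section
/- Let g : [n] → ℝ be nonincreasing, and suppose that for every constant c ∈ ℝ, at least ρ·n points x ∈ [n] satisfy g(x) ≠ c, where 0 < ρ ≤ 1/2. Then the number of ordered pairs (u,v) ∈ [n]×[n] with u < v and g(u) > g(v) is at least (ρ/2)·(n²/2). -/
open scoped Classical

/-- If `g : [n] → ℝ` is nonincreasing and, for every constant `c`, at least `ρ·n` points
have `g(x) ≠ c` (with `0 < ρ ≤ 1/2`), then at least `(ρ/2)·(n²/2)` ordered pairs `(u,v)`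
with `u < v` are decreasing for `g`. -/
theorem stmt6 (n : ℕ) (g : ℕ → ℝ) (ρ : ℝ) (hρ0 : 0 < ρ) (hρ2 : ρ ≤ 1 / 2)
    (hanti : AntitoneOn g (Set.Icc 1 n))
    (hfar : ∀ c : ℝ, ρ * n ≤ (((Finset.Icc 1 n).filter fun z => g z ≠ c).card : ℝ)) :
    ρ / 2 * ((n : ℝ) ^ 2 / 2) ≤
      ((((Finset.Icc 1 n) ×ˢ (Finset.Icc 1 n)).filter fun q =>
        q.1 < q.2 ∧ g q.2 < g q.1).card : ℝ) := by
  rcases Nat.eq_zero_or_pos n with hn | hn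
  · subst hn
    simp
  set m := (n + 1) / 2 with hmdef
  have hm1 : 1 ≤ m := by omega
  have hmn : m ≤ n := by omega
  set c := g m with hc
  have gmono : ∀ u v : ℕ, 1 ≤ u → u ≤ v → v ≤ n → g v ≤ g u := fun u v h1 h2 h3 =>
    hanti ⟨h1, le_trans h2 h3⟩ ⟨le_trans h1 h2, h3⟩ h2
  have hA : ∀ u, u ∈ Finset.Icc 1 n → c < g u → u < m := by
    intro u hu hcu
    by_contra h
    push_neg at h
    have := gmono m u hm1 h (Finset.mem_Icc.mp hu).2
    linarith
  have hB : ∀ v, v ∈ Finset.Icc 1 n → g v < c → m < v := by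
    intro v hv hvc
    by_contra h
    push_neg at h
    have := gmono v m (Finset.mem_Icc.mp hv).1 h hmn
    linarith
  set A := (Finset.Icc 1 n).filter fun z => c < g z with hAdef
  set B := (Finset.Icc 1 n).filter fun z => g z < c with hBdef
  set T := ((Finset.Icc 1 n) ×ˢ (Finset.Icc 1 n)).filter fun q =>
    q.1 < q.2 ∧ g q.2 < g q.1 with hTdef
  have hunion : (Finset.Icc 1 n).filter (fun z => g z ≠ c) ⊆ A ∪ B := by
    intro z hz
    simp only [Finset.mem_filter, Finset.mem_union, hAdef, hBdef] at *
    rcases lt_trichotomy (g z) c with h | h | h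
    · exact Or.inr ⟨hz.1, h⟩
    · exact absurd h hz.2
    · exact Or.inl ⟨hz.1, h⟩
  have hcard : ρ * n ≤ (A.card : ℝ) + B.card := by
    have h2 : ((Finset.Icc 1 n).filter (fun z => g z ≠ c)).card ≤ A.card + B.card :=
      le_trans (Finset.card_le_card hunion) (Finset.card_union_le A B)
    calc ρ * n ≤ _ := hfar c
      _ ≤ (A.card : ℝ) + B.card := by exact_mod_cast h2
  have hhalf : ρ * n / 2 ≤ (A.card : ℝ) ∨ ρ * n / 2 ≤ (B.card : ℝ) := by
    by_contra h
    push_neg at h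
    linarith [h.1, h.2]
  have hρn : 0 ≤ ρ * n / 2 := by positivity
  have hn2 : (0:ℝ) ≤ (n : ℝ) / 2 := by positivity
  have hgoal : ρ / 2 * ((n : ℝ) ^ 2 / 2) = (ρ * n / 2) * ((n : ℝ) / 2) := by ring
  rcases hhalf with h | h
  · -- pair A with Icc m n
    have hn2m : (n : ℝ) / 2 ≤ ((Finset.Icc m n).card : ℝ) := by
      rw [Nat.card_Icc]
      have h1 : n ≤ 2 * (n + 1 - m) := by omega
      have h2 := (Nat.cast_le (α := ℝ)).mpr h1
      push_cast at h2
      linarith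
    have hsub : A ×ˢ Finset.Icc m n ⊆ T := by
      intro q hq
      simp only [Finset.mem_product, Finset.mem_filter, hAdef, hTdef] at hq ⊢
      obtain ⟨⟨hq1, hcq⟩, hq2⟩ := hq
      have hum : q.1 < m := hA q.1 hq1 hcq
      have hq2' := Finset.mem_Icc.mp hq2
      refine ⟨⟨hq1, Finset.mem_Icc.mpr ⟨le_trans hm1 hq2'.1, hq2'.2⟩⟩,
        lt_of_lt_of_le hum hq2'.1, ?_⟩
      have : g q.2 ≤ c := gmono m q.2 hm1 hq2'.1 hq2'.2
      linarith
    have hle := Finset.card_le_card hsub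
    rw [Finset.card_product] at hle
    have hcast : (A.card : ℝ) * ((Finset.Icc m n).card : ℝ) ≤ (T.card : ℝ) := by
      exact_mod_cast hle
    have hmul := mul_le_mul h hn2m hn2 (le_trans hρn h)
    rw [hgoal]
    linarith
  · -- pair Icc 1 m with B
    have hn2m : (n : ℝ) / 2 ≤ ((Finset.Icc 1 m).card : ℝ) := by
      rw [Nat.card_Icc, Nat.add_sub_cancel]
      have h1 : n ≤ 2 * m := by omega
      have h2 := (Nat.cast_le (α := ℝ)).mpr h1
      push_cast at h2
      linarith
    have hsub : (Finset.Icc 1 m) ×ˢ B ⊆ T := by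
      intro q hq
      simp only [Finset.mem_product, Finset.mem_filter, hBdef, hTdef] at hq ⊢
      obtain ⟨hq1, hq2, hvc⟩ := hq
      have hvm : m < q.2 := hB q.2 hq2 hvc
      have hq1' := Finset.mem_Icc.mp hq1
      refine ⟨⟨Finset.mem_Icc.mpr ⟨hq1'.1, le_trans hq1'.2 hmn⟩, hq2⟩,
        lt_of_le_of_lt hq1'.2 hvm, ?_⟩
      have : c ≤ g q.1 := gmono q.1 m hq1'.1 hq1'.2 hmn
      linarith
    have hle := Finset.card_le_card hsub
    rw [Finset.card_product] at hle
    have hcast : ((Finset.Icc 1 m).card : ℝ) * (B.card : ℝ) ≤ (T.card : ℝ) := by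
      exact_mod_cast hle
    have hmul := mul_le_mul hn2m h hρn (le_trans hn2 hn2m)
    rw [hgoal]
    nlinarith
end

section
/- Let d be a power of 2 and d' = d + log₂ d. Fix any nonempty set R ⊆ {1,…,d}, any values r_i ∈ R for each i ∈ {1,…,d}, and any signs α_b ∈ {−1,+1} for each b ∈ {1,…,d}. Define f : {0,1}^{d'} → ℝ by f(x) = Σ_{b ∈ {1,…,d'}∖R} x_b·3^b + α_{r_i}·x_{r_i}·3^{r_i}, where i ∈ {1,…,d} is the index of the subcube C_i containing x. Then f is unate. -/
open Finset

/-- The index (in `{0, …, d-1}`, corresponding to the paper's `{1, …, d}`) of the subcube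
containing `x ∈ {0,1}^{d+p}`, determined by the top `p` coordinates:
`∑_{t=1}^{p} x_{d+t} · 2^{t-1}`. -/
def subcubeIdx (d p : ℕ) (x : Fin (d + p) → Bool) : ℕ :=
  ∑ t : Fin p, if x ⟨d + t.1, Nat.add_lt_add_left t.2 d⟩ then 2 ^ t.1 else 0

/-- A function on the hypercube `{0,1}^m` is unate if it is `b`-monotone for some
`b ∈ {0,1}^m`: nondecreasing in every coordinate `j` with `b_j = 0` and nonincreasing in
every coordinate `j` with `b_j = 1`. -/
def IsUnate {m : ℕ} (h : (Fin m → Bool) → ℝ) : Prop :=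
  ∃ σ : Fin m → Bool, ∀ j : Fin m, ∀ x : Fin m → Bool,
    if σ j then h (Function.update x j true) ≤ h (Function.update x j false)
    else h (Function.update x j false) ≤ h (Function.update x j true)

/-- The `Yes`-distribution function: `f(x) = ∑_{b ∉ R} x_b 3^b + α_{r_i} x_{r_i} 3^{r_i}`
on the subcube `C_i` containing `x`.  (Lean coordinate `b : Fin (d+p)` stands for the
paper's coordinate `b + 1`, with weight `3^(b+1)`.) -/
noncomputable def fYes (d p : ℕ) (R : Finset (Fin (d + p))) (r : ℕ → Fin (d + p))
    (α : Fin (d + p) → ℝ) (x : Fin (d + p) → Bool) : ℝ :=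
  (∑ b ∈ Finset.univ \ R, if x b then (3 : ℝ) ^ ((b : ℕ) + 1) else 0) +
    α (r (subcubeIdx d p x)) *
      (if x (r (subcubeIdx d p x)) then (3 : ℝ) ^ (((r (subcubeIdx d p x)) : ℕ) + 1) else 0)

/-- The `No`-distribution function: `g(x) = ∑_{b ∉ R} x_b 3^b + β_i x_{r_i} 3^{r_i}`
on the subcube `C_i` containing `x`. -/
noncomputable def gNo (d p : ℕ) (R : Finset (Fin (d + p))) (r : ℕ → Fin (d + p))
    (β : ℕ → ℝ) (x : Fin (d + p) → Bool) : ℝ :=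
  (∑ b ∈ Finset.univ \ R, if x b then (3 : ℝ) ^ ((b : ℕ) + 1) else 0) +
    β (subcubeIdx d p x) *
      (if x (r (subcubeIdx d p x)) then (3 : ℝ) ^ (((r (subcubeIdx d p x)) : ℕ) + 1) else 0)

lemma sum_pow_two_lt (p : ℕ) : ∑ i ∈ Finset.range p, 2 ^ i < 2 ^ p := by
  induction p with
  | zero => simp
  | succ n ih => rw [Finset.sum_range_succ, pow_succ]; omega

lemma subcubeIdx_lt (d p : ℕ) (x : Fin (d + p) → Bool) : subcubeIdx d p x < 2 ^ p := by
  have h1 : subcubeIdx d p x ≤ ∑ t : Fin p, 2 ^ t.1 :=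
    Finset.sum_le_sum (fun t _ => by split <;> simp)
  have h2 : ∑ t : Fin p, 2 ^ t.1 = ∑ i ∈ Finset.range p, 2 ^ i :=
    Fin.sum_univ_eq_sum_range _ _
  exact lt_of_le_of_lt (h1.trans_eq h2) (sum_pow_two_lt p)

lemma subcubeIdx_update_eq (d p : ℕ) (x : Fin (d + p) → Bool) (j : Fin (d + p))
    (hj : (j : ℕ) < d) (v : Bool) :
    subcubeIdx d p (Function.update x j v) = subcubeIdx d p x := by
  unfold subcubeIdx
  refine Finset.sum_congr rfl (fun t _ => ?_)
  rw [Function.update_of_ne]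
  exact Fin.ne_of_val_ne (by simp; omega)

lemma sum_update_eq {dp : ℕ} (R : Finset (Fin dp)) (x : Fin dp → Bool) (j : Fin dp) (v : Bool) :
    (∑ b ∈ Finset.univ \ R, if Function.update x j v b then (3 : ℝ) ^ ((b : ℕ) + 1) else 0)
    = (∑ b ∈ (Finset.univ \ R).erase j, if x b then (3 : ℝ) ^ ((b : ℕ) + 1) else 0)
      + (if j ∈ R then 0 else (if v then (3 : ℝ) ^ ((j : ℕ) + 1) else 0)) := by
  by_cases hj : j ∈ R
  · rw [if_pos hj, add_zero]
    have hje : j ∉ Finset.univ \ R := by simp [hj]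
    rw [Finset.erase_eq_of_notMem hje]
    refine Finset.sum_congr rfl (fun b hb => ?_)
    have hbj : b ≠ j := by rintro rfl; exact hje hb
    rw [Function.update_of_ne hbj]
  · rw [if_neg hj]
    have hjm : j ∈ Finset.univ \ R := by simp [hj]
    rw [← Finset.add_sum_erase _ _ hjm, Function.update_self, add_comm]
    congr 1
    refine Finset.sum_congr rfl (fun b hb => ?_)
    rw [Function.update_of_ne (Finset.ne_of_mem_erase hb)]

/-- Every function in the support of the `Yes`-distribution is unate. -/
theorem stmt7 (p d : ℕ) (hd : d = 2 ^ p)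
    (R : Finset (Fin (d + p))) (hRne : R.Nonempty) (hRd : ∀ b ∈ R, (b : ℕ) < d)
    (r : ℕ → Fin (d + p)) (hr : ∀ i < d, r i ∈ R)
    (α : Fin (d + p) → ℝ) (hα : ∀ b, α b = 1 ∨ α b = -1)
    (f : (Fin (d + p) → Bool) → ℝ) (hf : ∀ x, f x = fYes d p R r α x) :
    IsUnate f := by
  classical
  refine ⟨fun j => decide (j ∈ R ∧ α j = -1), fun j x => ?_⟩
  simp only [decide_eq_true_eq]
  have hlt : ∀ y : Fin (d + p) → Bool, subcubeIdx d p y < d := fun y =>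
    hd ▸ subcubeIdx_lt d p y
  have hpow : (0:ℝ) < 3 ^ ((j:ℕ) + 1) := by positivity
  by_cases hjd : (j : ℕ) < d
  · -- subcube index is stable
    have hsi : ∀ v : Bool, subcubeIdx d p (Function.update x j v) = subcubeIdx d p x :=
      fun v => subcubeIdx_update_eq d p x j hjd v
    have hri : r (subcubeIdx d p x) ∈ R := hr _ (hlt x)
    have hfv : ∀ v : Bool, f (Function.update x j v)
        = (∑ b ∈ (Finset.univ \ R).erase j, if x b then (3:ℝ)^((b:ℕ)+1) else 0)
          + (if j ∈ R then 0 else (if v then (3:ℝ)^((j:ℕ)+1) else 0))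
          + α (r (subcubeIdx d p x)) *
            (if (if r (subcubeIdx d p x) = j then v else x (r (subcubeIdx d p x)))
              then (3:ℝ)^(((r (subcubeIdx d p x)) : ℕ)+1) else 0) := by
      intro v
      rw [hf, fYes, hsi, sum_update_eq, Function.update_apply]
    have h0 := hfv false
    have h1 := hfv true
    by_cases hjR : j ∈ R
    · by_cases hrij : r (subcubeIdx d p x) = j
      · simp [hrij, hjR] at h0 h1
        by_cases hσ : j ∈ R ∧ α j = -1
        · rw [if_pos hσ, h0, h1, hσ.2]
          linarith
        · rw [if_neg hσ, h0, h1]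
          have hα1 : α j = 1 := by
            rcases hα j with h | h
            · exact h
            · exact absurd ⟨hjR, h⟩ hσ
          rw [hα1]
          linarith
      · simp [hrij, hjR] at h0 h1
        split <;> exact le_of_eq (by rw [h0, h1])
    · have hrij : r (subcubeIdx d p x) ≠ j := fun h => hjR (h ▸ hri)
      have hσ : ¬ (j ∈ R ∧ α j = -1) := fun h => hjR h.1
      rw [if_neg hσ]
      simp [hrij, hjR] at h0 h1
      rw [h0, h1]
      linarith
  · -- top coordinate: big weight dominates
    have hjR : j ∉ R := fun h => hjd (hRd j h)
    have hσ : ¬ (j ∈ R ∧ α j = -1) := fun h => hjR h.1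
    rw [if_neg hσ]
    have hfv : ∀ v : Bool, f (Function.update x j v)
        = (∑ b ∈ (Finset.univ \ R).erase j, if x b then (3:ℝ)^((b:ℕ)+1) else 0)
          + (if v then (3:ℝ)^((j:ℕ)+1) else 0)
          + α (r (subcubeIdx d p (Function.update x j v))) *
            (if x (r (subcubeIdx d p (Function.update x j v)))
              then (3:ℝ)^(((r (subcubeIdx d p (Function.update x j v))) : ℕ)+1) else 0) := by
      intro v
      have hrv : ((r (subcubeIdx d p (Function.update x j v))) : ℕ) < d :=
        hRd _ (hr _ (hlt _))
      rw [hf, fYes, sum_update_eq, if_neg hjR,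
        Function.update_of_ne (Fin.ne_of_val_ne (by omega))]
    have hbound : ∀ c : Fin (d + p), c ∈ R →
        |α c * (if x c then (3:ℝ)^((c:ℕ)+1) else 0)| ≤ 3 ^ d := by
      intro c hc
      have hcd : (c : ℕ) + 1 ≤ d := hRd c hc
      rw [abs_mul]
      have h1 : |α c| = 1 := by rcases hα c with h | h <;> simp [h]
      rw [h1, one_mul]
      have h2 : |(if x c then (3:ℝ)^((c:ℕ)+1) else 0)| ≤ (3:ℝ)^((c:ℕ)+1) := by
        split
        · rw [abs_of_nonneg (by positivity)]
        · simp only [abs_zero]; positivity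
      exact h2.trans (by gcongr; norm_num)
    have h0 := hfv false
    have h1 := hfv true
    simp only [Bool.false_eq_true, if_false, if_true, add_zero] at h0 h1
    rw [h0, h1]
    have hb0 := abs_le.mp (hbound _ (hr _ (hlt (Function.update x j false))))
    have hb1 := abs_le.mp (hbound _ (hr _ (hlt (Function.update x j true))))
    have hjj : (3:ℝ)^(d+1) ≤ 3^((j:ℕ)+1) := by gcongr <;> [norm_num; omega]
    have hd1 : (3:ℝ)^(d+1) = 3 * 3^d := by rw [pow_succ]; ring
    have hdnn : (0:ℝ) ≤ 3^d := by positivity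
    linarith [hb0.1, hb0.2, hb1.1, hb1.2]
end

section
/- Let d be a power of 2 and d' = d + log₂ d. Let h : {0,1}^{d'} → ℝ be any function of the form h(x) = Σ_{b=d+1}^{d'} 3^b·x_b + Σ_{b=1}^{d} c_b(x)·3^b·x_b, where each c_b : {0,1}^{d'} → {−1,0,+1} is an arbitrary function. Then for every x ∈ C_i and y ∈ C_j with i < j, we have h(x) < h(y). -/
open Finset

/-! On the subcube whose top bits are `a`, the top coordinates of `h` contribute `3^(d+1)` times
the base-3 number `ofBits 3 a`, while the signed low coordinates contribute less than
`3^(d+1) / 2` in absolute value, since `∑_{b=1}^{d} 3^b = (3^(d+1) - 3) / 2`. A bit string read in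
base 2 and in base 3 gives numbers that compare the same way, so `i < j` makes the top part at `y`
exceed the one at `x` by at least `3^(d+1)`, which the low parts cannot make up. -/

def ofBits (r : ℕ) {p : ℕ} (a : Fin p → Bool) : ℕ :=
  ∑ t : Fin p, if a t then r ^ (t : ℕ) else 0

theorem ofBits_eq_sum_pow (r : ℕ) {p : ℕ} (a : Fin p → Bool) :
    ofBits r a = ∑ k ∈ (univ.filter fun t => a t).map Fin.valEmbedding, r ^ k := by
  rw [sum_map, sum_filter]
  rfl

/-- Both sides compare the sets of set bits colexicographically. -/
theorem ofBits_lt_ofBits_of_base {r s p : ℕ} (hr : 2 ≤ r) (hs : 2 ≤ s) {a b : Fin p → Bool}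
    (h : ofBits r a < ofBits r b) : ofBits s a < ofBits s b := by
  rw [ofBits_eq_sum_pow, ofBits_eq_sum_pow, geomSum_lt_geomSum_iff_toColex_lt_toColex hr] at h
  rwa [ofBits_eq_sum_pow, ofBits_eq_sum_pow, geomSum_lt_geomSum_iff_toColex_lt_toColex hs]

theorem subcubeIdx_eq_ofBits (d p : ℕ) (x : Fin (d + p) → Bool) :
    subcubeIdx d p x = ofBits 2 fun t => x (Fin.natAdd d t) :=
  rfl

theorem sum_high_coords_eq (r : ℕ) {d p : ℕ} (x : Fin (d + p) → Bool) :
    (∑ b : Fin (d + p), if d ≤ (b : ℕ) then (if x b then (r : ℝ) ^ ((b : ℕ) + 1) else 0) else 0)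
      = (r : ℝ) ^ (d + 1) * ofBits r fun t => x (Fin.natAdd d t) := by
  rw [Fin.sum_univ_add, ofBits, Nat.cast_sum, mul_sum]
  simp only [Fin.val_castAdd, Fin.val_natAdd, Fin.is_lt, not_le_of_gt, if_false, sum_const_zero,
    zero_add, Nat.le_add_right, if_true]
  refine sum_congr rfl fun t _ => ?_
  split <;> push_cast <;> ring

theorem sum_range_pow_three_succ_mul_two (d : ℕ) :
    (∑ n ∈ range d, (3 : ℝ) ^ (n + 1)) * 2 = 3 ^ (d + 1) - 3 := by
  have := geom_sum_mul (3 : ℝ) d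
  simp only [pow_succ, ← sum_mul] at this ⊢
  linarith

theorem abs_sum_low_coords_lt_half {d p : ℕ} (c : Fin (d + p) → ℝ) (hc : ∀ b, |c b| ≤ 1)
    (x : Fin (d + p) → Bool) :
    |∑ b : Fin (d + p), if (b : ℕ) < d then
        c b * (if x b then (3 : ℝ) ^ ((b : ℕ) + 1) else 0) else 0| < 3 ^ (d + 1) / 2 := by
  have hterm : ∀ b : Fin (d + p), |if (b : ℕ) < d then
      c b * (if x b then (3 : ℝ) ^ ((b : ℕ) + 1) else 0) else 0|
        ≤ if (b : ℕ) < d then (3 : ℝ) ^ ((b : ℕ) + 1) else 0 := by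
    intro b
    split_ifs
    · rw [abs_mul, abs_pow, abs_of_pos (three_pos : (0 : ℝ) < 3)]
      exact mul_le_of_le_one_left (pow_nonneg zero_le_three _) (hc b)
    · simp
    · simp
  have hsum : (∑ b : Fin (d + p), if (b : ℕ) < d then (3 : ℝ) ^ ((b : ℕ) + 1) else 0)
      = ∑ n ∈ range d, (3 : ℝ) ^ (n + 1) := by
    simp [Fin.sum_univ_add, Fin.sum_univ_eq_sum_range (fun n => (3 : ℝ) ^ (n + 1))]
  have hbound := (abs_sum_le_sum_abs _ univ).trans (sum_le_sum fun b _ => hterm b)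
  rw [hsum] at hbound
  linarith [sum_range_pow_three_succ_mul_two d]

theorem stmt9_general (p d : ℕ)
    (c : Fin (d + p) → (Fin (d + p) → Bool) → ℝ)
    (hc : ∀ b x, c b x = -1 ∨ c b x = 0 ∨ c b x = 1)
    (h : (Fin (d + p) → Bool) → ℝ)
    (hh : ∀ x, h x =
      (∑ b : Fin (d + p), if d ≤ (b : ℕ) then (if x b then (3 : ℝ) ^ ((b : ℕ) + 1) else 0) else 0)
      + ∑ b : Fin (d + p), if (b : ℕ) < d then
          c b x * (if x b then (3 : ℝ) ^ ((b : ℕ) + 1) else 0) else 0)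
    (x y : Fin (d + p) → Bool) (i j : ℕ)
    (hxi : subcubeIdx d p x = i) (hyj : subcubeIdx d p y = j) (hij : i < j) :
    h x < h y := by
  have hc_abs : ∀ z b, |c b z| ≤ 1 := fun z b => by
    rcases hc b z with hb | hb | hb <;> simp [hb]
  have hdigits : (ofBits 3 fun t => x (Fin.natAdd d t)) + 1 ≤ ofBits 3 fun t => y (Fin.natAdd d t) :=
    ofBits_lt_ofBits_of_base le_rfl (by norm_num) (by simpa [← subcubeIdx_eq_ofBits, hxi, hyj])
  have hlow_x := (abs_lt.mp (abs_sum_low_coords_lt_half (fun b => c b x) (hc_abs x) x)).2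
  have hlow_y := (abs_lt.mp (abs_sum_low_coords_lt_half (fun b => c b y) (hc_abs y) y)).1
  have hhigh_x := sum_high_coords_eq 3 x
  have hhigh_y := sum_high_coords_eq 3 y
  simp only [Nat.cast_ofNat] at hhigh_x hhigh_y
  have hscaled := mul_le_mul_of_nonneg_left (Nat.cast_le (α := ℝ).mpr hdigits)
    (pow_nonneg zero_le_three (d + 1))
  push_cast [mul_add_one] at hscaled
  rw [hh x, hh y, hhigh_x, hhigh_y]
  linarith

/-- For any function of the form
`h(x) = ∑_{b=d+1}^{d'} 3^b x_b + ∑_{b=1}^{d} c_b(x) 3^b x_b` with `c_b(x) ∈ {-1,0,1}`,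
points in an earlier subcube have strictly smaller value: `x ∈ C_i`, `y ∈ C_j`, `i < j`
implies `h(x) < h(y)`. -/
theorem stmt9 (p d : ℕ) (hd : d = 2 ^ p)
    (c : Fin (d + p) → (Fin (d + p) → Bool) → ℝ)
    (hc : ∀ b x, c b x = -1 ∨ c b x = 0 ∨ c b x = 1)
    (h : (Fin (d + p) → Bool) → ℝ)
    (hh : ∀ x, h x =
      (∑ b : Fin (d + p), if d ≤ (b : ℕ) then (if x b then (3 : ℝ) ^ ((b : ℕ) + 1) else 0) else 0)
      + ∑ b : Fin (d + p), if (b : ℕ) < d then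
          c b x * (if x b then (3 : ℝ) ^ ((b : ℕ) + 1) else 0) else 0)
    (x y : Fin (d + p) → Bool) (i j : ℕ) (hi : i < d) (hj : j < d)
    (hxi : subcubeIdx d p x = i) (hyj : subcubeIdx d p y = j) (hij : i < j) :
    h x < h y :=
  stmt9_general p d c hc h hh x y i j hxi hyj hij
end

section
/- There exists d₀ such that the following holds for every power of two d ≥ d₀ with log₂ d even. Let d' = d + log₂ d and let Q ⊆ {0,1}^{d'} be a set of at most d·log₂ d points such that every two distinct points of Q differ in at least 5 coordinates. Choose k uniformly at random from {1,…,(log₂ d)/2}, and then choose R uniformly at random among all subsets of {1,…,d} of size 2^k. Then the probability that there exist distinct x, y ∈ Q with cap(x,y) ⊆ R is at most d^{−1/4}. -/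
open Finset

/-- The set of coordinates at which `x` and `y` differ. -/
def diffSet {m : ℕ} (x y : Fin m → Bool) : Finset (Fin m) :=
  Finset.univ.filter fun b => x b ≠ y b

/-- `cap(x,y)`: the 5 largest coordinates at which `x` and `y` differ. -/
def capSet {m : ℕ} (x y : Fin m → Bool) : Finset (Fin m) :=
  (diffSet x y).filter fun b => ((diffSet x y).filter fun b' => b < b').card < 5

/-!
Since every two points of `Q` differ in at least 5 coordinates, each `cap(x,y)` is a 5-set, and
a uniform `n`-subset of a `d`-set contains a fixed 5-set with probability
`C(n,5) / C(d,5) ≤ (n/d)^5 · 3840`. A union bound over the at most `(d log₂ d)^2` pairs, averaged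
over `n = 2^k` with `k ≤ (log₂ d)/2`, is dominated by the largest `n = √d` and gives
`O(log d · d^2 · d^{5/2} / d^5) = O(log d / √d)`, which is below `d^{-1/4}` for large `d`.
-/

section TopElements

variable {α : Type*} [LinearOrder α]

lemma strictAntiOn_card_filter_lt (t : Finset α) :
    StrictAntiOn (fun b => #{b' ∈ t | b < b'}) t := by
  intro a _ b hb hab
  refine card_lt_card ((ssubset_iff_of_subset fun x hx => ?_).mpr ⟨b, ?_, by simp⟩)
  · simp only [mem_filter] at hx ⊢
    exact ⟨hx.1, hab.trans hx.2⟩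
  · exact mem_filter.mpr ⟨hb, hab⟩

lemma image_card_filter_lt (t : Finset α) :
    t.image (fun b => #{b' ∈ t | b < b'}) = range #t := by
  refine eq_of_subset_of_card_le (fun x hx => ?_) ?_
  · obtain ⟨a, ha, rfl⟩ := mem_image.mp hx
    exact mem_range.mpr (card_lt_card (filter_ssubset.mpr ⟨a, ha, lt_irrefl a⟩))
  · rw [card_range, card_image_of_injOn (strictAntiOn_card_filter_lt t).injOn]

lemma card_filter_card_filter_lt_lt (t : Finset α) {j : ℕ} (hj : j ≤ #t) :
    #{b ∈ t | #{b' ∈ t | b < b'} < j} = j := by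
  rw [← card_image_of_injOn ((strictAntiOn_card_filter_lt t).injOn.mono (filter_subset _ t)),
    ← filter_image (p := (· < j)), image_card_filter_lt,
    show (range #t).filter (· < j) = range j by ext; simp; omega, card_range]

end TopElements

lemma card_capSet {m : ℕ} {x y : Fin m → Bool} (h : 5 ≤ #(diffSet x y)) : #(capSet x y) = 5 :=
  card_filter_card_filter_lt_lt _ h

section Supersets

variable {α : Type*} [DecidableEq α]

lemma card_filter_powersetCard_superset_le (U S : Finset α) (n : ℕ) :
    #{R ∈ U.powersetCard n | S ⊆ R} ≤ (#U - #S).choose (n - #S) := by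
  by_cases hSU : S ⊆ U
  · rw [← card_sdiff_of_subset hSU, ← card_powersetCard]
    refine card_le_card_of_injOn (· \ S) (fun R hR => ?_) (fun R₁ hR₁ R₂ hR₂ h => ?_)
    · obtain ⟨⟨hRU, hRn⟩, hSR⟩ := by simpa only [coe_filter, mem_powersetCard] using hR
      rw [mem_coe, mem_powersetCard]
      exact ⟨sdiff_subset_sdiff hRU le_rfl, by rw [card_sdiff_of_subset hSR, hRn]⟩
    · simp only [coe_filter] at hR₁ hR₂
      rw [← sdiff_union_of_subset hR₁.2, ← sdiff_union_of_subset hR₂.2]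
      exact congrArg (· ∪ S) h
  · rw [filter_false_of_mem fun R hR hSR => hSU (hSR.trans (mem_powersetCard.mp hR).1)]
    exact Nat.zero_le _

/-- Union bound over `I`, combined with `C(#U,n) C(n,s) = C(#U,s) C(#U-s,n-s)`. -/
lemma card_filter_exists_subset_mul_choose_le {ι : Type*} (U : Finset α) (I : Finset ι)
    (c : ι → Finset α) {s : ℕ} (hc : ∀ i ∈ I, #(c i) = s) (n : ℕ) :
    #{R ∈ U.powersetCard n | ∃ i ∈ I, c i ⊆ R} * (#U).choose s
      ≤ #I * n.choose s * (#U).choose n := by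
  rcases lt_or_ge n s with hns | hsn
  · rw [filter_false_of_mem fun R hR ⟨i, hi, hiR⟩ => by
      have := card_le_card hiR
      rw [hc i hi, (mem_powersetCard.mp hR).2] at this
      omega]
    simp
  · have hunion : {R ∈ U.powersetCard n | ∃ i ∈ I, c i ⊆ R}
        ⊆ I.biUnion fun i => {R ∈ U.powersetCard n | c i ⊆ R} := by
      intro R hR
      obtain ⟨hRU, i, hi, hiR⟩ := mem_filter.mp hR
      exact mem_biUnion.mpr ⟨i, hi, mem_filter.mpr ⟨hRU, hiR⟩⟩
    calc #{R ∈ U.powersetCard n | ∃ i ∈ I, c i ⊆ R} * (#U).choose s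
        ≤ #I * (#U - s).choose (n - s) * (#U).choose s := by
          gcongr
          refine (card_le_card hunion).trans (card_biUnion_le_card_mul _ _ _ fun i hi => ?_)
          simpa only [hc i hi] using card_filter_powersetCard_superset_le U (c i) n
      _ = #I * n.choose s * (#U).choose n := by
          rw [mul_assoc, mul_comm ((#U - s).choose _), ← Nat.choose_mul hsn]
          ring

lemma card_filter_exists_subset_div_le {ι : Type*} (U : Finset α) (I : Finset ι)
    (c : ι → Finset α) {s n : ℕ} (hc : ∀ i ∈ I, #(c i) = s) (hs : s ≤ #U)
    (hn : n ≤ #U) :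
    (#{R ∈ U.powersetCard n | ∃ i ∈ I, c i ⊆ R} : ℝ) / #(U.powersetCard n)
      ≤ #I * n.choose s / (#U).choose s := by
  rw [card_powersetCard, div_le_div_iff₀ (mod_cast Nat.choose_pos hn)
    (mod_cast Nat.choose_pos hs)]
  exact_mod_cast card_filter_exists_subset_mul_choose_le U I c hc n

end Supersets

lemma card_filter_exists_capSet_subset_div_le {m : ℕ} (U : Finset (Fin m))
    (Q : Finset (Fin m → Bool)) (hQ : ∀ x ∈ Q, ∀ y ∈ Q, x ≠ y → 5 ≤ #(diffSet x y))
    {n : ℕ} (h5 : 5 ≤ #U) (hn : n ≤ #U) :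
    (#{R ∈ U.powersetCard n | ∃ x ∈ Q, ∃ y ∈ Q, x ≠ y ∧ capSet x y ⊆ R} : ℝ)
        / #(U.powersetCard n)
      ≤ #Q ^ 2 * n.choose 5 / (#U).choose 5 := by
  have hpairs : {R ∈ U.powersetCard n | ∃ x ∈ Q, ∃ y ∈ Q, x ≠ y ∧ capSet x y ⊆ R}
      = {R ∈ U.powersetCard n | ∃ z ∈ Q.offDiag, capSet z.1 z.2 ⊆ R} := by
    simp [and_assoc]
  rw [hpairs]
  refine (card_filter_exists_subset_div_le U Q.offDiag _
    (fun z hz => card_capSet (hQ _ (mem_offDiag.mp hz).1 _ (mem_offDiag.mp hz).2.1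
      (mem_offDiag.mp hz).2.2)) h5 hn).trans ?_
  gcongr
  exact_mod_cast (offDiag_card Q).le.trans (by rw [sq]; exact Nat.sub_le _ _)

lemma sum_Icc_choose_two_pow_le (m : ℕ) :
    ∑ k ∈ Icc 1 m, ((2 ^ k).choose 5 : ℝ) ≤ 32 * (2 ^ m) ^ 5 := by
  have hgeom : ∑ k ∈ Icc 1 m, (2 ^ k).choose 5 ≤ 32 ^ (m + 1) := by
    calc ∑ k ∈ Icc 1 m, (2 ^ k).choose 5
        ≤ ∑ k ∈ Icc 1 m, 32 ^ k := by
          gcongr with k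
          calc (2 ^ k).choose 5 ≤ (2 ^ k) ^ 5 := Nat.choose_le_pow _ _
            _ = 32 ^ k := by rw [← pow_mul, mul_comm k, pow_mul]; norm_num
      _ ≤ 32 ^ (m + 1) := by
          refine (Nat.geomSum_lt (by norm_num) fun k hk => ?_).le
          rw [mem_Icc] at hk
          omega
  calc ∑ k ∈ Icc 1 m, ((2 ^ k).choose 5 : ℝ) ≤ (32 ^ (m + 1) : ℕ) := mod_cast hgeom
    _ = 32 * (2 ^ m) ^ 5 := by push_cast; rw [← pow_mul, mul_comm m, pow_mul]; ring

lemma pow_div_le_choose_of_le {r n : ℕ} (h : 2 * r ≤ n + 2) :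
    ((n : ℝ) / 2) ^ r / r.factorial ≤ n.choose r := by
  refine le_trans ?_ (Nat.pow_le_choose r n)
  gcongr
  rw [div_le_iff₀ two_pos]
  exact_mod_cast (by omega : n ≤ (n + 1 - r) * 2)

lemma sq_le_two_pow {q : ℕ} (hq : 4 ≤ q) : q ^ 2 ≤ 2 ^ q := by
  induction q, hq using Nat.le_induction with
  | base => norm_num
  | succ n hn ih =>
    calc (n + 1) ^ 2 = n ^ 2 + (2 * n + 1) := by ring
      _ ≤ 2 ^ n + 2 ^ n := by gcongr; nlinarith
      _ = 2 ^ (n + 1) := by ring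

lemma mul_le_sqrt_two_pow {m : ℕ} (hm : 2 ^ 21 ≤ m) : 491520 * (m : ℝ) ≤ √(2 ^ m) := by
  have hq : 491520 * m ≤ 2 ^ (m / 2) :=
    calc 491520 * m ≤ (m / 2) ^ 2 := by
          rw [sq]; nlinarith [Nat.div_add_mod m 2, Nat.mod_lt m two_pos]
      _ ≤ 2 ^ (m / 2) := sq_le_two_pow (by omega)
  calc 491520 * (m : ℝ) ≤ 2 ^ (m / 2) := mod_cast hq
    _ ≤ √(2 ^ m) := Real.le_sqrt_of_sq_le (by
        rw [← pow_mul]; exact pow_le_pow_right₀ one_le_two (by omega))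

lemma inv_mul_sum_choose_div_le_rpow {m N : ℕ} (hm : 2 ^ 21 ≤ m)
    (hN : N ≤ 2 ^ (m + m) * (m + m)) :
    (m : ℝ)⁻¹ * ∑ k ∈ Icc 1 m,
        (N : ℝ) ^ 2 * ((2 ^ k).choose 5 : ℝ) / (2 ^ (m + m)).choose 5
      ≤ ((2 ^ (m + m) : ℕ) : ℝ) ^ (-(1 / 4) : ℝ) := by
  set a : ℝ := 2 ^ m
  have ha : 0 < a := by positivity
  have hd : ((2 ^ (m + m) : ℕ) : ℝ) = a ^ 2 := by push_cast; ring
  have hNa : (N : ℝ) ≤ 2 * m * a ^ 2 :=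
    (Nat.cast_le.mpr hN).trans_eq (by push_cast; ring)
  have hchoose : a ^ 10 / 3840 ≤ (2 ^ (m + m)).choose 5 := by
    have h32 : 2 ^ 5 ≤ 2 ^ (m + m) := Nat.pow_le_pow_right two_pos (by omega)
    calc a ^ 10 / 3840 = (((2 ^ (m + m) : ℕ) : ℝ) / 2) ^ 5 / (5 : ℕ).factorial := by
          rw [hd, Nat.factorial]; norm_num; ring
      _ ≤ _ := pow_div_le_choose_of_le (by omega)
  calc _ = (m : ℝ)⁻¹ * ((N : ℝ) ^ 2 * (∑ k ∈ Icc 1 m, ((2 ^ k).choose 5 : ℝ))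
          / (2 ^ (m + m)).choose 5) := by
        rw [← sum_div, ← mul_sum]
    _ ≤ (m : ℝ)⁻¹ * ((2 * m * a ^ 2) ^ 2 * (32 * a ^ 5) / (a ^ 10 / 3840)) := by
        gcongr
        exact sum_Icc_choose_two_pow_le m
    _ = 491520 * m / a := by field_simp; ring
    _ ≤ √a / a := by gcongr; exact mul_le_sqrt_two_pow hm
    _ = (√a)⁻¹ := Real.sqrt_div_self
    _ = ((2 ^ (m + m) : ℕ) : ℝ) ^ (-(1 / 4) : ℝ) := by
        rw [hd, Real.sqrt_eq_rpow, ← Real.rpow_natCast, ← Real.rpow_mul ha.le,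
          ← Real.rpow_neg ha.le]
        norm_num

/-- The abort event is unlikely: for large enough `d` (a power of two, `log₂ d` even), a
set `Q` of at most `d log₂ d` points of `{0,1}^{d + log₂ d}`, every two of which differ in
at least 5 coordinates, satisfies: when `k` is uniform in `{1, …, (log₂ d)/2}` and `R` is a
uniform subset of the first `d` coordinates of size `2^k`, the probability that some pair
`x ≠ y` of `Q` has `cap(x,y) ⊆ R` is at most `d^{-1/4}`. -/
theorem stmt11 : ∃ d₀ : ℕ, ∀ p d : ℕ, d = 2 ^ p → Even p → d₀ ≤ d →
    ∀ Q : Finset (Fin (d + p) → Bool), Q.card ≤ d * p →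
    (∀ x ∈ Q, ∀ y ∈ Q, x ≠ y → 5 ≤ (diffSet x y).card) →
    ((p / 2 : ℝ))⁻¹ * ∑ k ∈ Finset.Icc 1 (p / 2),
      (((((Finset.univ : Finset (Fin (d + p))).filter fun b : Fin (d + p) => (b : ℕ) < d).powersetCard
            (2 ^ k)).filter fun R =>
          ∃ x ∈ Q, ∃ y ∈ Q, x ≠ y ∧ capSet x y ⊆ R).card : ℝ) /
      (((((Finset.univ : Finset (Fin (d + p))).filter fun b : Fin (d + p) => (b : ℕ) < d).powersetCard
            (2 ^ k))).card : ℝ)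
    ≤ (d : ℝ) ^ (-(1 / 4) : ℝ) := by
  refine ⟨2 ^ 2 ^ 22, fun p d hd ⟨m, hpm⟩ hd₀ Q hQ hQdist => ?_⟩
  subst hd hpm
  have hm : 2 ^ 21 ≤ m := by
    have := (Nat.pow_le_pow_iff_right (by norm_num)).mp hd₀
    omega
  set U : Finset (Fin (2 ^ (m + m) + (m + m))) := {b | (b : ℕ) < 2 ^ (m + m)}
  have hU : #U = 2 ^ (m + m) := by
    rw [Fin.card_filter_val_lt]; omega
  have hpow {k : ℕ} (hk : k ≤ m + m) : 2 ^ k ≤ #U :=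
    hU.symm ▸ Nat.pow_le_pow_right two_pos hk
  rw [show (m + m) / 2 = m by omega, show ((m + m : ℕ) / 2 : ℝ) = m by push_cast; ring]
  refine le_trans (mul_le_mul_of_nonneg_left (sum_le_sum fun k hk => ?_) (by positivity))
    (inv_mul_sum_choose_div_le_rpow hm hQ)
  rw [mem_Icc] at hk
  have h := card_filter_exists_capSet_subset_div_le U Q hQdist (n := 2 ^ k)
    ((show 5 ≤ 2 ^ 3 by norm_num).trans (hpow (by omega))) (hpow (by omega))
  rwa [hU] at h
end

section
/- Let d be a power of 2 with log₂ d even, and let B_1, …, B_d ⊆ {1,…,d} be sets with Σ_{i=1}^d |B_i| ≤ M. Choose k uniformly at random from {1,…,(log₂ d)/2}, then choose R uniformly at random among all subsets of {1,…,d} of size 2^k, and then choose r_1, …, r_d independently and uniformly at random from R. Then the probability that there exist distinct indices i, j ∈ {1,…,d} with r_i = r_j, r_i ∈ B_i, and r_j ∈ B_j is at most 160·M/(d·log₂ d). -/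
/-!
For a fixed `R` of size `s`, a union bound over the common value `x = r_i = r_j` and over the
pairs `i ≠ j` with `x ∈ B_i ∩ B_j` bounds the collision probability by
`∑_{x ∈ R} min 1 (n_x² / s²)`, where `n_x` is the number of sets `B_i` containing `x`.
A uniform `R` of size `s` contains each `x` with probability `s / d`, so averaging over `R` gives
`(1 / d) ∑_x min s (n_x² / s)`. Over the dyadic sizes `s = 2^k` these terms are dominated by the
increments of `s ↦ 6 n_x · s / (n_x + s)` under doubling, which telescope to at most `6 n_x`; and
`∑_x n_x = ∑_i |B_i| ≤ M`. Averaging over the `p / 2` values of `k` gives `12 M / (d p)`.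
-/

open Finset Fintype

section Collisions

variable {ι α : Type*} [Fintype ι] [DecidableEq ι] [DecidableEq α]

lemma card_filter_piFinset_const_eq_and_eq_mul (s : Finset α) {i j : ι} (hij : i ≠ j)
    {x : α} (hx : x ∈ s) :
    #{f ∈ piFinset fun _ ↦ s | f i = x ∧ f j = x} * #s ^ 2 = #s ^ card ι := by
  rw [← filter_filter, ← piFinset_update_singleton_eq_filter_piFinset_eq (fun _ : ι ↦ s) i hx,
    card_filter_piFinset_eq_of_mem (Function.update (fun _ : ι ↦ s) i {x}) j
      (by simpa [hij.symm] using hx),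
    prod_congr rfl fun t _ ↦ (Function.apply_update (fun _ s ↦ #s) _ i {x} t),
    prod_update_of_mem (by simpa using hij)]
  simp only [card_singleton, prod_const, one_mul, ← pow_add]
  congr 1
  rw [card_sdiff_of_subset (by simpa using hij), card_singleton, card_erase_of_mem (mem_univ _),
    card_univ]
  have : 1 < card ι := Fintype.one_lt_card_iff_nontrivial.2 ⟨⟨i, j, hij⟩⟩
  omega

def collisions (B : ι → Finset α) (R : Finset α) : Finset (ι → α) :=
  {r ∈ piFinset fun _ ↦ R | ∃ i j, i ≠ j ∧ r i = r j ∧ r i ∈ B i ∧ r j ∈ B j}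

lemma card_filter_collide_at_mul_le (B : ι → Finset α) {R : Finset α} {x : α} (hx : x ∈ R) :
    #{r ∈ piFinset fun _ ↦ R | ∃ i j, i ≠ j ∧ r i = x ∧ r j = x ∧ x ∈ B i ∧ x ∈ B j} * #R ^ 2
      ≤ #{i | x ∈ B i} ^ 2 * #R ^ card ι := by
  set S : Finset ι := {i | x ∈ B i}
  have hsub : {r ∈ piFinset fun _ : ι ↦ R | ∃ i j, i ≠ j ∧ r i = x ∧ r j = x ∧ x ∈ B i ∧ x ∈ B j}
      ⊆ S.offDiag.biUnion fun ij ↦ {r ∈ piFinset fun _ : ι ↦ R | r ij.1 = x ∧ r ij.2 = x} := by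
    intro r hr
    obtain ⟨hrR, i, j, hij, hi, hj, hBi, hBj⟩ := mem_filter.1 hr
    exact mem_biUnion.2 ⟨(i, j), by simp [S, hij, hBi, hBj], mem_filter.2 ⟨hrR, hi, hj⟩⟩
  calc _ ≤ (∑ ij ∈ S.offDiag, #{r ∈ piFinset fun _ ↦ R | r ij.1 = x ∧ r ij.2 = x}) * #R ^ 2 := by
        gcongr
        exact (card_le_card hsub).trans card_biUnion_le
    _ = ∑ ij ∈ S.offDiag, #R ^ card ι := by
        rw [sum_mul]
        exact sum_congr rfl fun ij hij ↦
          card_filter_piFinset_const_eq_and_eq_mul R (mem_offDiag.1 hij).2.2 hx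
    _ ≤ #S ^ 2 * #R ^ card ι := by
        rw [sum_const, smul_eq_mul, offDiag_card, sq]
        gcongr
        exact Nat.sub_le _ _

lemma card_collisions_div_le (B : ι → Finset α) (R : Finset α) :
    (#(collisions B R) : ℝ) / #(piFinset fun _ : ι ↦ R)
      ≤ ∑ x ∈ R, min 1 ((#{i | x ∈ B i} : ℝ) ^ 2 / #R ^ 2) := by
  set collideAt : α → Finset (ι → α) := fun x ↦
    {r ∈ piFinset fun _ ↦ R | ∃ i j, i ≠ j ∧ r i = x ∧ r j = x ∧ x ∈ B i ∧ x ∈ B j}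
  have hsub : collisions B R ⊆ R.biUnion collideAt := by
    intro r hr
    obtain ⟨hrR, i, j, hij, hr_eq, hBi, hBj⟩ := mem_filter.1 hr
    exact mem_biUnion.2 ⟨r i, mem_piFinset.1 hrR i,
      mem_filter.2 ⟨hrR, i, j, hij, rfl, hr_eq.symm, hBi, hr_eq ▸ hBj⟩⟩
  have hcard : (#(piFinset fun _ : ι ↦ R) : ℝ) = #R ^ card ι := by simp
  calc (#(collisions B R) : ℝ) / #(piFinset fun _ : ι ↦ R)
      ≤ (∑ x ∈ R, #(collideAt x) : ℕ) / #(piFinset fun _ : ι ↦ R) := by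
        gcongr
        exact (card_le_card hsub).trans card_biUnion_le
    _ = ∑ x ∈ R, (#(collideAt x) : ℝ) / #R ^ card ι := by rw [hcard, Nat.cast_sum, sum_div]
    _ ≤ ∑ x ∈ R, min 1 ((#{i | x ∈ B i} : ℝ) ^ 2 / #R ^ 2) := by
        gcongr with x hx
        have hR : (0 : ℝ) < #R := by exact_mod_cast card_pos.2 ⟨x, hx⟩
        refine le_min (div_le_one_of_le₀ ?_ (by positivity)) ?_
        · rw [← hcard]
          exact_mod_cast card_le_card (filter_subset _ _)
        · rw [div_le_div_iff₀ (by positivity) (by positivity)]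
          exact_mod_cast card_filter_collide_at_mul_le B hx

end Collisions

lemma sum_powersetCard_sum_eq {α M : Type*} [DecidableEq α] [AddCommMonoid M] (u : Finset α)
    {n : ℕ} (hn : 1 ≤ n) (f : α → M) :
    ∑ R ∈ u.powersetCard n, ∑ x ∈ R, f x = (#u - 1).choose (n - 1) • ∑ x ∈ u, f x := by
  rw [sum_comm' (t' := u) (s' := fun x ↦ {R ∈ u.powersetCard n | {x} ⊆ R})]
  · rw [smul_sum]
    refine sum_congr rfl fun x hx ↦ ?_
    rw [sum_const, card_filter_powersetCard_subset _ _ _ (by simpa using hx) (by simpa using hn),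
      card_singleton]
  · intro R x
    simp only [mem_powersetCard, mem_filter, singleton_subset_iff]
    constructor
    · rintro ⟨⟨hRu, hR⟩, hx⟩; exact ⟨⟨⟨hRu, hR⟩, hx⟩, hRu hx⟩
    · rintro ⟨⟨⟨hRu, hR⟩, hx⟩, -⟩; exact ⟨⟨hRu, hR⟩, hx⟩

lemma inv_card_powersetCard_mul_sum_sum_eq {α : Type*} [DecidableEq α] (u : Finset α) {n : ℕ}
    (hn : 1 ≤ n) (hnu : n ≤ #u) (f : α → ℝ) :
    (#(u.powersetCard n) : ℝ)⁻¹ * ∑ R ∈ u.powersetCard n, ∑ x ∈ R, f x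
      = n / #u * ∑ x ∈ u, f x := by
  have hchoose : (#u - 1).choose (n - 1) * #u = (#u).choose n * n := by
    have := Nat.add_one_mul_choose_eq (#u - 1) (n - 1)
    rwa [Nat.sub_add_cancel hn, Nat.sub_add_cancel (hn.trans hnu), mul_comm] at this
  have hpos : (0 : ℝ) < (#u).choose n := by exact_mod_cast Nat.choose_pos hnu
  have hu : (0 : ℝ) < #u := by exact_mod_cast hn.trans hnu
  rw [sum_powersetCard_sum_eq u hn, card_powersetCard, nsmul_eq_mul, ← mul_assoc]
  congr 1
  field_simp
  exact_mod_cast hchoose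

lemma sum_card_filter_mem_eq_sum_card {ι α : Type*} [Fintype ι] [Fintype α] [DecidableEq α]
    (B : ι → Finset α) :
    ∑ x, #{i | x ∈ B i} = ∑ i, #(B i) := by
  simpa [bipartiteAbove, bipartiteBelow] using
    (sum_card_bipartiteAbove_eq_sum_card_bipartiteBelow (s := univ) (t := univ)
      (fun i x ↦ x ∈ B i)).symm

lemma expected_card_collisions_div_le {ι α : Type*} [Fintype ι] [DecidableEq ι] [Fintype α]
    [DecidableEq α] (B : ι → Finset α) {s : ℕ} (hs : 1 ≤ s) :
    (#(univ.powersetCard s : Finset (Finset α)) : ℝ)⁻¹ *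
        ∑ R ∈ univ.powersetCard s, (#(collisions B R) : ℝ) / #(piFinset fun _ : ι ↦ R)
      ≤ (∑ x, min (s : ℝ) ((#{i | x ∈ B i} : ℝ) ^ 2 / s)) / card α := by
  rcases le_or_gt s (card α) with hsα | hαs
  · have hs0 : (0 : ℝ) < s := by exact_mod_cast hs
    calc _ ≤ (#(univ.powersetCard s : Finset (Finset α)) : ℝ)⁻¹ *
          ∑ R ∈ univ.powersetCard s, ∑ x ∈ R, min 1 ((#{i | x ∈ B i} : ℝ) ^ 2 / s ^ 2) := by
          gcongr with R hR
          simpa [(mem_powersetCard.1 hR).2] using card_collisions_div_le B R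
      _ = s / card α * ∑ x, min 1 ((#{i | x ∈ B i} : ℝ) ^ 2 / s ^ 2) :=
          inv_card_powersetCard_mul_sum_sum_eq univ hs (by simpa using hsα) _
      _ = _ := by
          rw [mul_sum, sum_div]
          refine sum_congr rfl fun x _ ↦ ?_
          rw [div_mul_eq_mul_div, mul_min_of_nonneg _ _ hs0.le]
          field_simp
  · rw [powersetCard_eq_empty.2 (by rwa [card_univ] : #(univ : Finset α) < s)]
    rw [Finset.sum_empty, mul_zero]
    positivity

lemma min_le_six_mul_sub_div_add {a x : ℝ} (ha : 0 ≤ a) (hx : 0 < x) :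
    min x (a ^ 2 / x) ≤ 6 * a * (2 * x / (a + 2 * x) - x / (a + x)) := by
  have h : 2 * x / (a + 2 * x) - x / (a + x) = a * x / ((a + 2 * x) * (a + x)) := by
    field_simp; ring
  rw [h, ← mul_div_assoc, le_div_iff₀ (by positivity)]
  rcases le_total x a with hxa | hax
  · calc min x (a ^ 2 / x) * ((a + 2 * x) * (a + x)) ≤ x * (6 * a ^ 2) :=
          mul_le_mul (min_le_left _ _) (by nlinarith) (by positivity) hx.le
      _ = 6 * a * (a * x) := by ring
  · calc min x (a ^ 2 / x) * ((a + 2 * x) * (a + x)) ≤ a ^ 2 / x * (6 * x ^ 2) :=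
          mul_le_mul (min_le_right _ _) (by nlinarith) (by positivity) (by positivity)
      _ = 6 * a * (a * x) := by field_simp

lemma sum_Icc_min_two_pow_sq_div_le {a : ℝ} (ha : 0 ≤ a) (K : ℕ) :
    ∑ k ∈ Icc 1 K, min ((2 : ℝ) ^ k) (a ^ 2 / 2 ^ k) ≤ 6 * a := by
  set φ : ℕ → ℝ := fun k ↦ 2 ^ k / (a + 2 ^ k)
  calc ∑ k ∈ Icc 1 K, min ((2 : ℝ) ^ k) (a ^ 2 / 2 ^ k)
      ≤ ∑ k ∈ range (K + 1), min ((2 : ℝ) ^ k) (a ^ 2 / 2 ^ k) :=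
        sum_le_sum_of_subset_of_nonneg (fun k hk ↦ by simp only [mem_Icc, mem_range] at hk ⊢; omega)
          fun _ _ _ ↦ le_min (by positivity) (by positivity)
    _ ≤ ∑ k ∈ range (K + 1), 6 * a * (φ (k + 1) - φ k) := by
        gcongr with k
        simpa [φ, pow_succ, mul_comm] using min_le_six_mul_sub_div_add ha (pow_pos two_pos k)
    _ = 6 * a * (φ (K + 1) - φ 0) := by rw [← mul_sum, sum_range_sub]
    _ ≤ 6 * a * 1 := by
        gcongr
        have h1 : φ (K + 1) ≤ 1 := div_le_one_of_le₀ (by linarith) (by positivity)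
        have h0 : 0 ≤ φ 0 := by positivity
        linarith
    _ = 6 * a := mul_one _

theorem stmt12_general (p d : ℕ)
    (B : Fin d → Finset (Fin d)) (M : ℕ) (hM : ∑ i : Fin d, (B i).card ≤ M) :
    ((p / 2 : ℝ))⁻¹ * ∑ k ∈ Finset.Icc 1 (p / 2),
      ((((Finset.univ : Finset (Fin d)).powersetCard (2 ^ k)).card : ℝ))⁻¹ *
        ∑ R ∈ (Finset.univ : Finset (Fin d)).powersetCard (2 ^ k),
          ((((Fintype.piFinset fun _ : Fin d => R).filter fun r =>
              ∃ i j : Fin d, i ≠ j ∧ r i = r j ∧ r i ∈ B i ∧ r j ∈ B j).card : ℝ) /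
            (((Fintype.piFinset fun _ : Fin d => R).card : ℝ)))
    ≤ 160 * (M : ℝ) / ((d : ℝ) * (p : ℝ)) := by
  have hsum : (∑ x, #{i | x ∈ B i} : ℝ) ≤ M := by
    exact_mod_cast (sum_card_filter_mem_eq_sum_card B).trans_le hM
  -- Here `∃ i j : Fin d` is decided by `Nat.decidableExistsFin`, not by the instance in `collisions`.
  have hcoll (R : Finset (Fin d)) : {r ∈ piFinset fun _ : Fin d ↦ R |
      ∃ i j : Fin d, i ≠ j ∧ r i = r j ∧ r i ∈ B i ∧ r j ∈ B j} = collisions B R := by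
    unfold collisions
    congr
  simp only [hcoll]
  calc _ ≤ (p / 2 : ℝ)⁻¹ * ∑ k ∈ Icc 1 (p / 2),
          (∑ x, min ((2 : ℝ) ^ k) ((#{i | x ∈ B i} : ℝ) ^ 2 / 2 ^ k)) / d := by
        gcongr with k
        have h := expected_card_collisions_div_le B (Nat.one_le_two_pow (n := k))
        push_cast at h
        rwa [Fintype.card_fin] at h
    _ = (p / 2 : ℝ)⁻¹ * ((∑ x, ∑ k ∈ Icc 1 (p / 2),
          min ((2 : ℝ) ^ k) ((#{i | x ∈ B i} : ℝ) ^ 2 / 2 ^ k)) / d) := by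
        rw [← sum_div, sum_comm]
    _ ≤ (p / 2 : ℝ)⁻¹ * ((∑ x, 6 * (#{i | x ∈ B i} : ℝ)) / d) := by
        gcongr with x
        exact sum_Icc_min_two_pow_sq_div_le (Nat.cast_nonneg _) _
    _ ≤ (p / 2 : ℝ)⁻¹ * (6 * M / d) := by
        rw [← mul_sum]
        gcongr
    _ = 12 * M / (d * p) := by ring
    _ ≤ 160 * M / (d * p) := by gcongr; norm_num

/-- The collision event is unlikely: with `d = 2^p` (`p` even) and sets
`B_1, …, B_d ⊆ {1, …, d}` of total size at most `M`, when `k` is uniform in `{1, …, p/2}`,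
`R` is a uniform subset of `{1, …, d}` of size `2^k`, and `r_1, …, r_d` are i.i.d. uniform
in `R`, the probability that some `i ≠ j` have `r_i = r_j`, `r_i ∈ B_i`, `r_j ∈ B_j`
is at most `160 M / (d log₂ d)`. -/
theorem stmt12 (p d : ℕ) (hd : d = 2 ^ p) (hpe : Even p)
    (B : Fin d → Finset (Fin d)) (M : ℕ) (hM : ∑ i : Fin d, (B i).card ≤ M) :
    ((p / 2 : ℝ))⁻¹ * ∑ k ∈ Finset.Icc 1 (p / 2),
      ((((Finset.univ : Finset (Fin d)).powersetCard (2 ^ k)).card : ℝ))⁻¹ *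
        ∑ R ∈ (Finset.univ : Finset (Fin d)).powersetCard (2 ^ k),
          ((((Fintype.piFinset fun _ : Fin d => R).filter fun r =>
              ∃ i j : Fin d, i ≠ j ∧ r i = r j ∧ r i ∈ B i ∧ r j ∈ B j).card : ℝ) /
            (((Fintype.piFinset fun _ : Fin d => R).card : ℝ)))
    ≤ 160 * (M : ℝ) / ((d : ℝ) * (p : ℝ)) :=
  stmt12_general p d B M hM
end

section
/- Let A be an arbitrary type, D a positive integer, and V a finite nonempty set of vectors in A^D. Let c ≥ 1 be a natural number. For distinct x, y ∈ V, let cap_c(x,y) denote the set consisting of the c smallest coordinates i ∈ {1,…,D} with x_i ≠ y_i (or all such coordinates, if x and y differ in fewer than c coordinates), and let cap_c(V) = ⋃_{x,y ∈ V, x ≠ y} cap_c(x,y). Then |cap_c(V)| ≤ c·(|V| − 1). -/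
/-! For a prefix length `i` and a threshold `k`, let `N(i, k)` be the number of classes of `V`
under the equivalence generated by "differ in at most `k` of the first `i` coordinates", and
`Φ(i) = ∑_{k < c} N(i, k)`. Then `Φ` is monotone, `c ≤ Φ(0)` and `Φ(D) ≤ c·|V|`. If coordinate `b`
lies in `cap_c(V)`, let `m < c` be the least number of differences before `b` among pairs of `V`
differing at `b`. A minimizing pair is joined at level `b` with threshold `m`, while at level
`b + 1` any two vectors within `m` differences agree at `b`; so `N(b + 1, m) > N(b, m)`. Hence `Φ`
increases at every coordinate of `cap_c(V)`, and `|cap_c(V)| ≤ Φ(D) - Φ(0) ≤ c·(|V| - 1)`. -/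

open Finset

section QuotCard

variable {α : Type*} [Finite α] {r s : α → α → Prop}

theorem Quot.natCard_le_of_le (hrs : ∀ ⦃a b⦄, r a b → s a b) :
    Nat.card (Quot s) ≤ Nat.card (Quot r) :=
  Nat.card_le_card_of_surjective (Quot.map id hrs) (Quot.map_surjective hrs Function.surjective_id)

theorem Quot.natCard_lt_of_le (hrs : ∀ ⦃a b⦄, r a b → s a b) {x y : α} (hs : s x y)
    (hr : Quot.mk r x ≠ Quot.mk r y) : Nat.card (Quot s) < Nat.card (Quot r) := by
  by_contra! hle
  have hbij := (Quot.map_surjective hrs Function.surjective_id).bijective_of_nat_card_le hle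
  exact hr (hbij.injective (Quot.sound hs))

end QuotCard

namespace CapBound

open scoped Classical

variable {A : Type*} {D : ℕ}

noncomputable def diffCountBelow (i : ℕ) (x y : Fin D → A) : ℕ :=
  #{b : Fin D | x b ≠ y b ∧ (b : ℕ) < i}

theorem diffCountBelow_mono {i j : ℕ} (h : i ≤ j) (x y : Fin D → A) :
    diffCountBelow i x y ≤ diffCountBelow j x y :=
  card_le_card fun b hb => by
    simp only [mem_filter, mem_univ, true_and] at hb ⊢
    exact ⟨hb.1, hb.2.trans_le h⟩

theorem diffCountBelow_lt_succ {x y : Fin D → A} {b : Fin D} (hb : x b ≠ y b) :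
    diffCountBelow b x y < diffCountBelow (b + 1) x y := by
  refine card_lt_card ⟨fun a ha => ?_, fun hsub => ?_⟩
  · simp only [mem_filter, mem_univ, true_and] at ha ⊢
    exact ⟨ha.1, ha.2.trans (Nat.lt_succ_self _)⟩
  · simpa using hsub (by simp [hb] : b ∈ _)

variable (V : Finset (Fin D → A))

noncomputable def numClasses (i k : ℕ) : ℕ :=
  Nat.card (Quot fun x y : V => diffCountBelow i (x : Fin D → A) y ≤ k)

theorem numClasses_mono {i j : ℕ} (h : i ≤ j) (k : ℕ) : numClasses V i k ≤ numClasses V j k :=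
  Quot.natCard_le_of_le fun _ _ hxy => (diffCountBelow_mono h _ _).trans hxy

theorem numClasses_pos (hV : V.Nonempty) (i k : ℕ) : 0 < numClasses V i k :=
  Nat.card_pos_iff.2 ⟨⟨Quot.mk _ ⟨_, hV.choose_spec⟩⟩, inferInstance⟩

theorem numClasses_le_card (i k : ℕ) : numClasses V i k ≤ #V :=
  (Nat.card_le_card_of_surjective _ Quot.mk_surjective).trans_eq (Nat.card_eq_finsetCard V)

theorem numClasses_lt_succ {b : Fin D} {m : ℕ} {x y : Fin D → A} (hx : x ∈ V) (hy : y ∈ V)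
    (hxy : x b ≠ y b) (hm : diffCountBelow b x y ≤ m)
    (hmin : ∀ z ∈ V, ∀ w ∈ V, z b ≠ w b → m ≤ diffCountBelow b z w) :
    numClasses V b m < numClasses V (b + 1) m := by
  -- minimality of `m`: a pair differing at `b` has more than `m` differences below `b + 1`
  have hagree : ∀ z w : V, diffCountBelow (b + 1) (z : Fin D → A) w ≤ m →
      (z : Fin D → A) b = (w : Fin D → A) b := fun z w hzw => by
    by_contra hne
    have := diffCountBelow_lt_succ hne
    have := hmin z z.2 w w.2 hne
    omega
  refine Quot.natCard_lt_of_le (fun z w hzw => (diffCountBelow_mono b.val.le_succ _ _).trans hzw)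
    (x := ⟨x, hx⟩) (y := ⟨y, hy⟩) hm fun hq => hxy ?_
  exact congrArg (Quot.lift (fun z : V => (z : Fin D → A) b) hagree) hq

noncomputable def potential (c i : ℕ) : ℕ := ∑ k ∈ range c, numClasses V i k

theorem potential_mono (c : ℕ) : Monotone (potential V c) := fun _ _ h =>
  sum_le_sum fun k _ => numClasses_mono V h k

theorem le_potential (hV : V.Nonempty) (c i : ℕ) : c ≤ potential V c i := by
  simpa [potential] using card_nsmul_le_sum (range c) (numClasses V i) 1
    fun k _ => numClasses_pos V hV i k

theorem potential_le (c i : ℕ) : potential V c i ≤ c * #V := by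
  simpa [potential, mul_comm] using sum_le_card_nsmul (range c) (numClasses V i) #V
    fun k _ => numClasses_le_card V i k

/-- `cap_c(x, y)`: a differing coordinate is among the `c` smallest ones iff fewer than `c`
differences precede it. -/
noncomputable def cap (c : ℕ) (x y : Fin D → A) : Finset (Fin D) :=
  (univ.filter fun b : Fin D => x b ≠ y b).filter fun b =>
    ((univ.filter fun b' : Fin D => x b' ≠ y b').filter fun b' => b' < b).card < c

theorem mem_cap {c : ℕ} {x y : Fin D → A} {b : Fin D} :
    b ∈ cap c x y ↔ x b ≠ y b ∧ diffCountBelow b x y < c := by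
  simp only [cap, mem_filter, mem_univ, true_and, filter_filter, diffCountBelow, Fin.lt_def]

theorem potential_lt_succ_of_mem_cap {c : ℕ} {x y : Fin D → A} (hx : x ∈ V) (hy : y ∈ V)
    {b : Fin D} (hb : b ∈ cap c x y) : potential V c b < potential V c (b + 1) := by
  obtain ⟨hxy, hc⟩ := mem_cap.1 hb
  obtain ⟨⟨z, w⟩, hzw, hmin⟩ := exists_min_image ((V ×ˢ V).filter fun q => q.1 b ≠ q.2 b)
    (fun q => diffCountBelow b q.1 q.2) ⟨(x, y), by simp [hx, hy, hxy]⟩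
  simp only [mem_filter, mem_product, Prod.forall, and_imp] at hzw hmin
  have hm : diffCountBelow b z w < c := (hmin x y hx hy hxy).trans_lt hc
  refine sum_lt_sum (fun k _ => numClasses_mono V b.val.le_succ k)
    ⟨_, mem_range.2 hm, numClasses_lt_succ V hzw.1.1 hzw.1.2 hzw.2 le_rfl ?_⟩
  exact fun z' hz' w' hw' => hmin z' w' hz' hw'

theorem card_biUnion_cap_le (hV : V.Nonempty) (c : ℕ) :
    #((V ×ˢ V).biUnion fun q => cap c q.1 q.2) ≤ c * (#V - 1) := by
  set S := (V ×ˢ V).biUnion fun q => cap c q.1 q.2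
  set P := potential V c
  have hstep : ∀ b ∈ S, 1 ≤ P (b + 1) - P b := by
    intro b hb
    obtain ⟨⟨x, y⟩, hxy, hb⟩ := mem_biUnion.1 hb
    obtain ⟨hx, hy⟩ := mem_product.1 hxy
    exact Nat.sub_pos_of_lt (potential_lt_succ_of_mem_cap V hx hy hb)
  calc #S = ∑ b ∈ S, 1 := card_eq_sum_ones S
    _ ≤ ∑ b ∈ S, (P (b + 1) - P b) := sum_le_sum hstep
    _ ≤ ∑ b : Fin D, (P (b + 1) - P b) := sum_le_univ_sum_of_nonneg fun _ => Nat.zero_le _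
    _ = P D - P 0 := by rw [Fin.sum_univ_eq_sum_range (fun i => P (i + 1) - P i),
        sum_range_tsub (potential_mono V c)]
    _ ≤ c * #V - c := tsub_le_tsub (potential_le V c D) (le_potential V hV c 0)
    _ = c * (#V - 1) := (Nat.mul_sub_one c #V).symm

end CapBound

open scoped Classical in
theorem stmt13_general {A : Type*} (D : ℕ)
    (V : Finset (Fin D → A)) (hV : V.Nonempty) (c : ℕ) :
    ((V ×ˢ V).biUnion fun q =>
      (Finset.univ.filter fun b : Fin D => q.1 b ≠ q.2 b).filter fun b =>
        ((Finset.univ.filter fun b' : Fin D => q.1 b' ≠ q.2 b').filter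
          fun b' => b' < b).card < c).card
      ≤ c * (V.card - 1) :=
  CapBound.card_biUnion_cap_le V hV c

open scoped Classical in
/-- For a finite nonempty set `V` of vectors in `A^D` and `c ≥ 1`, letting `cap_c(x,y)` be
the `c` smallest coordinates at which `x` and `y` differ (all of them if fewer than `c`),
the union `cap_c(V)` over all pairs of distinct vectors has size at most `c·(|V| - 1)`. -/
theorem stmt13 {A : Type*} (D : ℕ) (hD : 0 < D)
    (V : Finset (Fin D → A)) (hV : V.Nonempty) (c : ℕ) (hc : 1 ≤ c) :
    ((V ×ˢ V).biUnion fun q =>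
      (Finset.univ.filter fun b : Fin D => q.1 b ≠ q.2 b).filter fun b =>
        ((Finset.univ.filter fun b' : Fin D => q.1 b' ≠ q.2 b').filter
          fun b' => b' < b).card < c).card
      ≤ c * (V.card - 1) :=
  stmt13_general D V hV c
end

section
/- Let n be a power of 2, ℓ = log₂ n, d ≥ 1, m = d·ℓ, and let ε ∈ (0,1/4) be such that 1/(2ε) is a power of 2. Let m' = m − log₂(1/(2ε)), and for k ∈ {1,…,1/(2ε)} let S_k = {x ∈ {0,1}^m : (k−1)·ε·2^{m+1} ≤ val(x) ≤ k·ε·2^{m+1} − 1}. For j ∈ {1,…,m'} and k ∈ {1,…,1/(2ε)}, define g_{j,k} : {0,1}^m → ℝ by g_{j,k}(x) = 2·val(x) − 2^j − 1 if x_j = 1 and x ∈ S_k, and g_{j,k}(x) = 2·val(x) otherwise; and define ĝ_{j,k} : [n]^d → ℝ by ĝ_{j,k}(y) = g_{j,k}(φ(y)). Then ĝ_{j,k} is ε-far from unate: every unate G : [n]^d → ℝ satisfies |{y ∈ [n]^d : G(y) ≠ ĝ_{j,k}(y)}| ≥ ε·n^d. -/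
/-!
Let `j` be the (0-indexed) bit that `g_{j,k}` looks at, lying in coordinate `t₀ = ⌊j/ℓ⌋` of
`[n]^d`. If bit `j` of `x` is `0`, then passing from `x` to `x + 2^j` increases coordinate `t₀`
only, and changes `ĝ` by `-1` inside `S_k` and by `+2^{j+1}` outside. Since `S_k` is a union of
aligned blocks of length `2^{j+1}`, any aligned interval of length `|S_k| = ε 2^{m+1}` carries
`ε 2^m` disjoint such pairs. Take `S_k` itself if `G` is nondecreasing in coordinate `t₀` and an
interval disjoint from `S_k` otherwise: on every pair `ĝ` moves against `G`, so `G` and `ĝ`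
differ on one of its two points.
-/

open Finset
open scoped Classical

/-- `val(x) = ∑ x_i 2^{i-1}` of a bit vector (Lean coordinate `i` stands for the paper's
coordinate `i + 1`, with weight `2^i`). -/
def valB (m : ℕ) (x : Fin m → Bool) : ℕ :=
  ∑ i : Fin m, if x i then 2 ^ (i : ℕ) else 0

open Function

theorem valB_testBit_eq_mod (N m : ℕ) : valB m (fun i => N.testBit i) = N % 2 ^ m := by
  induction m with
  | zero => simp [valB, Nat.mod_one]
  | succ m ih =>
    rw [valB, Fin.sum_univ_castSucc]
    simp only [Fin.val_castSucc, Fin.val_last]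
    rw [← valB, ih, Nat.mod_pow_succ, ← Nat.toNat_testBit]
    cases N.testBit m <;> simp

theorem testBit_two_pow_succ_mul_add_of_lt (q : ℕ) {j r : ℕ} (hr : r < 2 ^ j) :
    (2 ^ (j + 1) * q + r).testBit j = false := by
  rw [Nat.testBit_two_pow_mul_add q (by rw [pow_succ]; omega), if_pos j.lt_succ_self,
    Nat.testBit_lt_two_pow hr]

theorem testBit_two_pow_succ_mul_add_two_pow_add (q : ℕ) {j r : ℕ} (hr : r < 2 ^ j) :
    (2 ^ (j + 1) * q + (2 ^ j + r)).testBit j = true := by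
  rw [Nat.testBit_two_pow_mul_add q (by rw [pow_succ]; omega), if_pos j.lt_succ_self,
    Nat.testBit_two_pow_add_eq, Nat.testBit_lt_two_pow hr, Bool.not_false]

theorem mul_add_div_of_lt {c r : ℕ} (q : ℕ) (hr : r < c) : (c * q + r) / c = q := by
  rw [Nat.mul_add_div (by omega), Nat.div_eq_of_lt hr, add_zero]

theorem mul_add_eq_mul_add_iff {c q q' r r' : ℕ} (hr : r < c) (hr' : r' < c) :
    c * q + r = c * q' + r' ↔ q = q' ∧ r = r' := by
  constructor
  · intro h
    have hq : q = q' := by rw [← mul_add_div_of_lt q hr, h, mul_add_div_of_lt q' hr']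
    subst hq
    exact ⟨rfl, by omega⟩
  · rintro ⟨rfl, rfl⟩
    rfl

theorem mul_add_mem_Ico_iff {a b c q r : ℕ} (hr : r < c) :
    (a * c ≤ c * q + r ∧ c * q + r < b * c) ↔ (a ≤ q ∧ q < b) := by
  have hpos : 0 < c := by omega
  rw [← Nat.le_div_iff_mul_le hpos, ← Nat.div_lt_iff_lt_mul hpos, mul_add_div_of_lt q hr]

theorem add_two_pow_lt_two_pow {a s l : ℕ} (hs : s < l) (ha : a < 2 ^ l)
    (hbit : a % 2 ^ (s + 1) < 2 ^ s) : a + 2 ^ s < 2 ^ l := by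
  have hdvd : 2 ^ (s + 1) ∣ 2 ^ l := pow_dvd_pow 2 hs
  have hq : a / 2 ^ (s + 1) < 2 ^ l / 2 ^ (s + 1) := Nat.div_lt_div_of_lt_of_dvd hdvd ha
  have hle : 2 ^ (s + 1) * (a / 2 ^ (s + 1) + 1) ≤ 2 ^ l := by
    calc 2 ^ (s + 1) * (a / 2 ^ (s + 1) + 1) ≤ 2 ^ (s + 1) * (2 ^ l / 2 ^ (s + 1)) :=
          Nat.mul_le_mul_left _ hq
      _ = 2 ^ l := Nat.mul_div_cancel' hdvd
  have := Nat.div_add_mod a (2 ^ (s + 1))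
  rw [pow_succ] at hle this hbit
  rw [mul_add] at hle
  omega

theorem finFunctionFinEquiv_update {n d : ℕ} (y : Fin d → Fin n) (t : Fin d) (w : Fin n) :
    (finFunctionFinEquiv (update y t w) : ℕ) + y t * n ^ (t : ℕ)
      = finFunctionFinEquiv y + w * n ^ (t : ℕ) := by
  simp only [finFunctionFinEquiv_apply]
  rw [← Finset.add_sum_erase _ _ (mem_univ t), ← Finset.add_sum_erase _ _ (mem_univ t),
    update_self, Finset.sum_congr rfl fun i hi => by rw [update_of_ne (ne_of_mem_erase hi)]]
  ring

section MixedRadix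

variable {n d : ℕ} [NeZero n]

def toPoint (n d : ℕ) [NeZero n] (x : ℕ) : Fin d → Fin n :=
  fun t => ⟨x / n ^ (t : ℕ) % n, Nat.mod_lt _ (NeZero.pos n)⟩

theorem finFunctionFinEquiv_symm_eq_toPoint {x : ℕ} (hx : x < n ^ d) :
    finFunctionFinEquiv.symm ⟨x, hx⟩ = toPoint n d x := by
  ext t
  rw [finFunctionFinEquiv_symm_apply_val]
  rfl

theorem toPoint_injOn : Set.InjOn (toPoint n d) (Set.Iio (n ^ d)) := by
  intro x hx x' hx' h
  rw [← finFunctionFinEquiv_symm_eq_toPoint hx, ← finFunctionFinEquiv_symm_eq_toPoint hx'] at h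
  exact Fin.mk.inj_iff.1 (finFunctionFinEquiv.symm.injective h)

end MixedRadix

theorem toPoint_add_two_pow {d l x j s : ℕ} {t : Fin d} (hs : s < l) (hj : l * t + s = j)
    (hx : x + 2 ^ j < (2 ^ l) ^ d) (hbit : x % 2 ^ (j + 1) < 2 ^ j) :
    ∃ w, toPoint (2 ^ l) d x t ≤ w ∧
      toPoint (2 ^ l) d (x + 2 ^ j) = update (toPoint (2 ^ l) d x) t w := by
  set y := toPoint (2 ^ l) d x with hy_def
  have hj' : 2 ^ j = 2 ^ s * (2 ^ l) ^ (t : ℕ) := by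
    rw [← hj, ← pow_mul, ← pow_add, add_comm]
  have hdigit : (y t : ℕ) % 2 ^ (s + 1) < 2 ^ s := by
    have hj1 : (2 ^ l) ^ (t : ℕ) * 2 ^ (s + 1) = 2 ^ (j + 1) := by
      rw [pow_succ, pow_succ, hj']; ring
    change x / (2 ^ l) ^ (t : ℕ) % 2 ^ l % 2 ^ (s + 1) < 2 ^ s
    rw [Nat.mod_mod_of_dvd _ (pow_dvd_pow 2 hs), ← Nat.mod_mul_right_div_self,
      Nat.div_lt_iff_lt_mul (by positivity), hj1, ← hj']
    exact hbit
  have hw := add_two_pow_lt_two_pow hs (y t).isLt hdigit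
  refine ⟨⟨y t + 2 ^ s, hw⟩, Fin.le_def.2 (by simp), ?_⟩
  have hy : (finFunctionFinEquiv y : ℕ) = x := by
    rw [hy_def, ← finFunctionFinEquiv_symm_eq_toPoint (by omega : x < (2 ^ l) ^ d),
      Equiv.apply_symm_apply]
  have hupd := finFunctionFinEquiv_update y t ⟨y t + 2 ^ s, hw⟩
  rw [← finFunctionFinEquiv_symm_eq_toPoint hx, Equiv.symm_apply_eq]
  ext
  simp only [hy, add_mul, ← hj'] at hupd ⊢
  omega

-- The paper's `φ`.
def concatBits (l d : ℕ) (y : Fin d → Fin (2 ^ l)) : Fin (d * l) → Bool :=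
  fun i =>
    Nat.testBit (y ⟨(i : ℕ) / l, Nat.div_lt_of_lt_mul (Nat.mul_comm d l ▸ i.isLt)⟩ : ℕ)
      ((i : ℕ) % l)

theorem concatBits_toPoint {l d : ℕ} (hl : 0 < l) (x : ℕ) :
    concatBits l d (toPoint (2 ^ l) d x) = fun i : Fin (d * l) => x.testBit i := by
  funext i
  simp only [concatBits, toPoint]
  rw [← pow_mul, Nat.testBit_mod_two_pow, Nat.testBit_div_two_pow,
    decide_eq_true (Nat.mod_lt _ hl), Bool.true_and, Nat.mod_add_div]

theorem real_block_bounds_iff {s m k : ℕ} (hsm : s ≤ m) (hk : 1 ≤ k) (x : ℕ) :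
    (((k : ℝ) - 1) * (1 / 2 ^ (s + 1)) * 2 ^ (m + 1) ≤ x ∧
      (x : ℝ) ≤ k * (1 / 2 ^ (s + 1)) * 2 ^ (m + 1) - 1) ↔
    ((k - 1) * 2 ^ (m - s) ≤ x ∧ x < k * 2 ^ (m - s)) := by
  have hP : (1 / 2 ^ (s + 1) : ℝ) * 2 ^ (m + 1) = (2 ^ (m - s) : ℕ) := by
    rw [Nat.cast_pow, Nat.cast_ofNat, one_div, inv_mul_eq_iff_eq_mul₀ (by positivity),
      ← pow_add]
    congr 1
    omega
  rw [mul_assoc, mul_assoc, hP, ← Nat.cast_one (R := ℝ), ← Nat.cast_sub hk, ← Nat.cast_mul,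
    ← Nat.cast_mul, Nat.cast_le, le_sub_iff_add_le, ← Nat.cast_add, Nat.cast_le,
    Nat.add_one_le_iff]

theorem exists_block (K : ℕ) {s k : ℕ} (hs : 1 ≤ s) (hk1 : 1 ≤ k) (hk2 : k ≤ 2 ^ s)
    (β : Bool) :
    ∃ Q₀, Q₀ + K ≤ 2 ^ s * K ∧
      ∀ q ∈ Ico Q₀ (Q₀ + K), ((k - 1) * K ≤ q ∧ q < k * K ↔ β = false) := by
  have h2s : 2 ≤ 2 ^ s := by simpa using Nat.pow_le_pow_right two_pos hs
  have hkK : (k - 1) * K + K = k * K := by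
    rw [Nat.sub_mul, one_mul, Nat.sub_add_cancel (by nlinarith)]
  cases β
  · refine ⟨(k - 1) * K, hkK ▸ Nat.mul_le_mul_right _ hk2, fun q hq => iff_of_true ?_ rfl⟩
    rw [mem_Ico] at hq
    omega
  · by_cases hk : k = 1
    · subst hk
      refine ⟨K, by nlinarith, fun q hq => iff_of_false ?_ (by simp)⟩
      rw [mem_Ico] at hq
      omega
    · refine ⟨0, by nlinarith, fun q hq => iff_of_false ?_ (by simp)⟩
      rw [mem_Ico] at hq
      have : K ≤ (k - 1) * K := Nat.le_mul_of_pos_left _ (by omega)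
      omega

theorem card_le_ncard_of_pairs {ι α : Type*} [Finite α] {p : α → Prop} {s : Finset ι}
    {lo hi : ι → α} (hlo : Set.InjOn lo s) (hhi : Set.InjOn hi s)
    (hdisj : ∀ a ∈ s, ∀ b ∈ s, lo a ≠ hi b) (hp : ∀ a ∈ s, p (lo a) ∨ p (hi a)) :
    #s ≤ {y | p y}.ncard := by
  rw [← Set.ncard_coe_finset]
  refine Set.ncard_le_ncard_of_injOn (fun a => if p (lo a) then lo a else hi a) ?_ ?_
  · intro a ha
    split_ifs with h
    exacts [h, (hp a ha).resolve_left h]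
  · intro a ha b hb hab
    dsimp only at hab
    split_ifs at hab
    exacts [hlo ha hb hab, absurd hab (hdisj a ha b hb), absurd hab.symm (hdisj b hb a ha),
      hhi ha hb hab]

theorem card_le_ncard_of_block_pairs {α : Type*} [Finite α] {p : α → Prop} {f : ℕ → α}
    {c h Q₀ K : ℕ} (hch : 2 * h ≤ c) (hf : Set.InjOn f (Set.Iio (c * (Q₀ + K))))
    (hp : ∀ q ∈ Ico Q₀ (Q₀ + K), ∀ r < h, p (f (c * q + r)) ∨ p (f (c * q + (h + r)))) :
    K * h ≤ {y | p y}.ncard := by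
  have hlt : ∀ q < Q₀ + K, ∀ r < c, c * q + r ∈ Set.Iio (c * (Q₀ + K)) := fun q hq r hr =>
    calc c * q + r < c * (q + 1) := by rw [mul_add_one]; omega
      _ ≤ c * (Q₀ + K) := Nat.mul_le_mul_left _ hq
  have hmem : ∀ a ∈ Ico Q₀ (Q₀ + K) ×ˢ range h, a.1 < Q₀ + K ∧ a.2 < h := by
    intro a ha
    simp only [mem_product, mem_Ico, mem_range] at ha
    exact ⟨ha.1.2, ha.2⟩
  have hcard : #(Ico Q₀ (Q₀ + K) ×ˢ range h) = K * h := by simp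
  rw [← hcard]
  refine card_le_ncard_of_pairs (lo := fun a => f (c * a.1 + a.2))
    (hi := fun a => f (c * a.1 + (h + a.2))) ?_ ?_ ?_ fun a ha => ?_
  · rintro ⟨q, r⟩ ha ⟨q', r'⟩ hb hqr
    obtain ⟨⟨hq, hr⟩, hq', hr'⟩ := And.intro (hmem _ ha) (hmem _ hb)
    have := hf (hlt q hq r (by omega)) (hlt q' hq' r' (by omega)) hqr
    rw [mul_add_eq_mul_add_iff (by omega) (by omega)] at this
    exact Prod.ext this.1 this.2
  · rintro ⟨q, r⟩ ha ⟨q', r'⟩ hb hqr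
    obtain ⟨⟨hq, hr⟩, hq', hr'⟩ := And.intro (hmem _ ha) (hmem _ hb)
    have := hf (hlt q hq (h + r) (by omega)) (hlt q' hq' (h + r') (by omega)) hqr
    rw [mul_add_eq_mul_add_iff (by omega) (by omega)] at this
    exact Prod.ext this.1 (by omega)
  · rintro ⟨q, r⟩ ha ⟨q', r'⟩ hb hqr
    obtain ⟨⟨hq, hr⟩, hq', hr'⟩ := And.intro (hmem _ ha) (hmem _ hb)
    have := hf (hlt q hq r (by omega)) (hlt q' hq' (h + r') (by omega)) hqr
    rw [mul_add_eq_mul_add_iff (by omega) (by omega)] at this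
    omega
  · rw [mem_product, mem_range] at ha
    exact hp a.1 ha.1 a.2 ha.2

-- `gVal j P k (val x) = g_{j+1,k}(x)` when `P = ε 2^{m+1}`; bit `j` is the paper's `x_{j+1}`.
def gVal (j P k x : ℕ) : ℝ :=
  if x.testBit j ∧ (k - 1) * P ≤ x ∧ x < k * P then 2 * (x : ℝ) - 2 ^ (j + 1) - 1 else 2 * x

theorem gVal_pair_sub {j K k q r : ℕ} (hr : r < 2 ^ j) :
    gVal j (K * 2 ^ (j + 1)) k (2 ^ (j + 1) * q + (2 ^ j + r))
        - gVal j (K * 2 ^ (j + 1)) k (2 ^ (j + 1) * q + r)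
      = if (k - 1) * K ≤ q ∧ q < k * K then -1 else 2 ^ (j + 1) := by
  have hr₂ : 2 ^ j + r < 2 ^ (j + 1) := by rw [pow_succ]; omega
  simp only [gVal, testBit_two_pow_succ_mul_add_of_lt q hr,
    testBit_two_pow_succ_mul_add_two_pow_add q hr, ← mul_assoc, mul_add_mem_Ico_iff hr₂,
    true_and, Bool.false_eq_true, false_and, if_false]
  split_ifs <;> push_cast <;> ring

theorem ne_or_ne_of_unate_violation {d n : ℕ} {G F : (Fin d → Fin n) → ℝ} {t : Fin d}
    {β : Bool}
    (hG : ∀ (y : Fin d → Fin n) (u v : Fin n), u ≤ v →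
      if β then G (update y t v) ≤ G (update y t u) else G (update y t u) ≤ G (update y t v))
    {y : Fin d → Fin n} {w : Fin n} (hw : y t ≤ w)
    (hF : if β then F y < F (update y t w) else F (update y t w) < F y) :
    G y ≠ F y ∨ G (update y t w) ≠ F (update y t w) := by
  by_contra! h
  have := hG y (y t) w hw
  rw [update_eq_self, h.1, h.2] at this
  cases β <;> simp only [Bool.false_eq_true, if_true, if_false] at this hF <;> linarith

theorem ne_or_ne_of_block_pair {d l j s K k q r : ℕ} {t : Fin d} {β : Bool}
    {G F : (Fin d → Fin (2 ^ l)) → ℝ} (hs : s < l) (hj : l * t + s = j)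
    (hG : ∀ (y : Fin d → Fin (2 ^ l)) (u v : Fin (2 ^ l)), u ≤ v →
      if β then G (update y t v) ≤ G (update y t u) else G (update y t u) ≤ G (update y t v))
    (hF : ∀ x < (2 ^ l) ^ d, F (toPoint (2 ^ l) d x) = gVal j (K * 2 ^ (j + 1)) k x)
    (hblock : (k - 1) * K ≤ q ∧ q < k * K ↔ β = false) (hr : r < 2 ^ j)
    (hq : 2 ^ (j + 1) * (q + 1) ≤ (2 ^ l) ^ d) :
    G (toPoint (2 ^ l) d (2 ^ (j + 1) * q + r)) ≠
        F (toPoint (2 ^ l) d (2 ^ (j + 1) * q + r)) ∨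
      G (toPoint (2 ^ l) d (2 ^ (j + 1) * q + (2 ^ j + r))) ≠
        F (toPoint (2 ^ l) d (2 ^ (j + 1) * q + (2 ^ j + r))) := by
  have hhi_lt : 2 ^ (j + 1) * q + (2 ^ j + r) < (2 ^ l) ^ d := by
    rw [mul_add_one, pow_succ] at hq
    rw [pow_succ]
    omega
  have hadd : 2 ^ (j + 1) * q + r + 2 ^ j = 2 ^ (j + 1) * q + (2 ^ j + r) := by ring
  obtain ⟨w, hw, hhi⟩ := toPoint_add_two_pow (x := 2 ^ (j + 1) * q + r) hs hj (hadd ▸ hhi_lt)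
    (by rw [Nat.mul_add_mod, Nat.mod_eq_of_lt (by rw [pow_succ]; omega)]; exact hr)
  rw [hadd] at hhi
  rw [hhi]
  refine ne_or_ne_of_unate_violation hG hw ?_
  have hgap := gVal_pair_sub (K := K) (k := k) (q := q) hr
  rw [← hhi, hF _ hhi_lt, hF _ (by omega)]
  cases β <;> simp [hblock] at hgap ⊢ <;> linarith [pow_pos (two_pos (α := ℝ)) (j + 1)]

/-- Here `n = 2^ℓ`, `m = dℓ`, `ε = 2^{-(s+1)}` (so `1/(2ε) = 2^s`), and `jp` is the paper's
`j`. A Lean point `y : Fin d → Fin n` stands for the paper's point `y + 1 ∈ [n]^d`, so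
`(y t : ℕ)` is the paper's `y_t - 1`. -/
theorem stmt15 (l : ℕ) (hl : 1 ≤ l) (n : ℕ) (hn : n = 2 ^ l)
    (d : ℕ)
    (s : ℕ) (ε : ℝ) (hε : ε = 1 / 2 ^ (s + 1)) (hε4 : ε < 1 / 4)
    (jp k : ℕ) (hjp1 : 1 ≤ jp) (hjp2 : jp ≤ d * l - s) (hk1 : 1 ≤ k) (hk2 : k ≤ 2 ^ s)
    (g : (Fin (d * l) → Bool) → ℝ)
    (hg : ∀ x, g x =
      if x ⟨jp - 1, by omega⟩ = true ∧
         ((k : ℝ) - 1) * ε * 2 ^ (d * l + 1) ≤ (valB (d * l) x : ℝ) ∧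
         (valB (d * l) x : ℝ) ≤ (k : ℝ) * ε * 2 ^ (d * l + 1) - 1
      then 2 * (valB (d * l) x : ℝ) - 2 ^ jp - 1
      else 2 * (valB (d * l) x : ℝ))
    (ghat : (Fin d → Fin n) → ℝ)
    (hghat : ∀ y, ghat y =
      g (fun jj => Nat.testBit (y ⟨(jj : ℕ) / l, Nat.div_lt_of_lt_mul (Nat.mul_comm d l ▸ jj.isLt)⟩ : ℕ)
          ((jj : ℕ) % l))) :
    ∀ G : (Fin d → Fin n) → ℝ,
      (∃ b : Fin d → Bool, ∀ t : Fin d, ∀ y : Fin d → Fin n, ∀ u v : Fin n, u ≤ v →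
        if b t then G (Function.update y t v) ≤ G (Function.update y t u)
        else G (Function.update y t u) ≤ G (Function.update y t v)) →
      ε * (n : ℝ) ^ d ≤ (Set.ncard {y : Fin d → Fin n | G y ≠ ghat y} : ℝ) := by
  subst hn hε
  rintro G ⟨b, hb⟩
  obtain ⟨j, rfl⟩ : ∃ j, jp = j + 1 := ⟨jp - 1, by omega⟩
  have hs : 1 ≤ s := Nat.one_le_iff_ne_zero.2 fun h => by subst h; norm_num at hε4
  set K := 2 ^ (d * l - s - (j + 1)) with hK
  have hP : 2 ^ (d * l - s) = K * 2 ^ (j + 1) := by rw [hK, ← pow_add]; congr 1; omega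
  have hN : (2 ^ l) ^ d = 2 ^ (j + 1) * (2 ^ s * K) := by
    rw [hK, ← pow_mul, mul_comm l d, ← pow_add, ← pow_add]; congr 1; omega
  have hval : ∀ x < (2 ^ l) ^ d,
      ghat (toPoint (2 ^ l) d x) = gVal j (K * 2 ^ (j + 1)) k x := by
    intro x hx
    rw [← pow_mul, mul_comm] at hx
    calc ghat (toPoint (2 ^ l) d x) = g (concatBits l d (toPoint (2 ^ l) d x)) := hghat _
      _ = _ := by
        rw [concatBits_toPoint hl, hg, valB_testBit_eq_mod, Nat.mod_eq_of_lt hx]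
        simp only [real_block_bounds_iff (s := s) (m := d * l) (by omega) hk1 x, hP,
          Nat.add_sub_cancel]
        rfl
  set t₀ : Fin d := ⟨j / l, Nat.div_lt_of_lt_mul (by rw [mul_comm]; omega)⟩
  have hj : l * t₀ + j % l = j := Nat.div_add_mod j l
  obtain ⟨Q₀, hQ₀, hblock⟩ := exists_block K hs hk1 hk2 (b t₀)
  calc 1 / 2 ^ (s + 1) * ((2 ^ l : ℕ) : ℝ) ^ d = (K * 2 ^ j : ℕ) := by
        rw [← Nat.cast_pow, hN, div_mul_eq_mul_div, one_mul, div_eq_iff (by positivity)]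
        push_cast
        ring
    _ ≤ _ := by
      exact_mod_cast card_le_ncard_of_block_pairs (c := 2 ^ (j + 1)) (pow_succ' 2 j).ge
        (toPoint_injOn.mono (Set.Iio_subset_Iio (hN ▸ Nat.mul_le_mul_left _ hQ₀)))
        fun q hq r hr => ne_or_ne_of_block_pair (Nat.mod_lt j hl) hj (hb t₀) hval (hblock q hq)
          hr (hN ▸ Nat.mul_le_mul_left _ (by rw [mem_Ico] at hq; omega))
end
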